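/- arXiv:1709.03801 — 2 statements merged into one kernel-verified Lean document; each statement's English description precedes it below -/
import Mathlib

section
/- Let A be a synaptic algebra, let e, f be effects in A (0 ≤ e, f ≤ 1), and suppose that e is a projection (e = e²) or f is a projection (f = f²). Then e ≤ f if and only if e ≤ₛ f. -/
open Filter Topology

/-- The order-unit norm associated with an order relation `le` on a real algebra:
`‖a‖ = inf {λ > 0 : −λ ≤ a ≤ λ}`. -/
noncomputable def ouNorm {R : Type*} [Ring R] [Algebra ℝ R] (le : R → R → Prop) (a : R) : ℝ :=
  sInf {l : ℝ | 0 < l ∧ le (algebraMap ℝ R (-l)) a ∧ le a (algebraMap ℝ R l)}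

/-- A synaptic algebra: a real linear subspace `A` (containing `1`) of a unital associative
algebra `R` over `ℝ` (a complex algebra is in particular a real algebra), equipped with a
partial order making it an Archimedean partially ordered real linear space with order unit `1`,
and satisfying axioms SA1–SA8.  The square root (SA5) and the carrier (SA6) are bundled as
data together with their defining properties. -/
structure SynapticAlgebra (R : Type*) [Ring R] [Algebra ℝ R] where
  A : Submodule ℝ R
  one_mem : (1 : R) ∈ A
  /-- the synaptic order (meaningful on elements of `A`) -/
  le : R → R → Prop
  -- SA1 : Archimedean partially ordered real linear space with order unit 1
  le_refl : ∀ a ∈ A, le a a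
  le_antisymm : ∀ a ∈ A, ∀ b ∈ A, le a b → le b a → a = b
  le_trans : ∀ a ∈ A, ∀ b ∈ A, ∀ c ∈ A, le a b → le b c → le a c
  add_le_add_right : ∀ a ∈ A, ∀ b ∈ A, ∀ c ∈ A, le a b → le (a + c) (b + c)
  smul_nonneg : ∀ r : ℝ, 0 ≤ r → ∀ a ∈ A, le 0 a → le 0 (r • a)
  arch : ∀ a ∈ A, ∀ b ∈ A, (∀ n : ℕ, le ((n : ℝ) • a) b) → le a 0
  one_order_unit : ∀ a ∈ A, ∃ n : ℕ, le a ((n : ℝ) • (1 : R))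
  zero_ne_one : (0 : R) ≠ 1
  -- SA2
  sq_mem : ∀ a ∈ A, a * a ∈ A
  sq_nn : ∀ a ∈ A, le 0 (a * a)
  -- SA3
  quad_mem : ∀ a ∈ A, ∀ b ∈ A, a * b * a ∈ A
  quad_nn : ∀ a ∈ A, ∀ b ∈ A, le 0 a → le 0 b → le 0 (a * b * a)
  -- SA4
  quad_zero : ∀ a ∈ A, ∀ b ∈ A, le 0 b → a * b * a = 0 → a * b = 0 ∧ b * a = 0
  -- SA5 : square roots
  sqrt : R → R
  sqrt_mem : ∀ a ∈ A, le 0 a → sqrt a ∈ A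
  sqrt_nn : ∀ a ∈ A, le 0 a → le 0 (sqrt a)
  sqrt_sq : ∀ a ∈ A, le 0 a → sqrt a * sqrt a = a
  sqrt_bicomm : ∀ a ∈ A, le 0 a → ∀ b ∈ A, a * b = b * a → sqrt a * b = b * sqrt a
  sqrt_unique : ∀ a ∈ A, le 0 a → ∀ b ∈ A, le 0 b → b * b = a →
    (∀ c ∈ A, a * c = c * a → b * c = c * b) → b = sqrt a
  -- SA6 : carriers
  carr : R → R
  carr_mem : ∀ a ∈ A, carr a ∈ A
  carr_idem : ∀ a ∈ A, carr a * carr a = carr a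
  carr_spec : ∀ a ∈ A, ∀ b ∈ A, (a * b = 0 ↔ carr a * b = 0)
  -- SA7
  inv_exists : ∀ a ∈ A, le 1 a → ∃ b ∈ A, a * b = 1 ∧ b * a = 1
  -- SA8
  comm_closed : ∀ a ∈ A, ∀ b ∈ A, ∀ f : ℕ → R, (∀ n, f n ∈ A) →
    (∀ n, le (f n) (f (n + 1))) → (∀ m n, f m * f n = f n * f m) →
    (∀ n, f n * b = b * f n) →
    Filter.Tendsto (fun n => ouNorm le (a - f n)) Filter.atTop (nhds 0) →
    a * b = b * a

namespace SynapticAlgebra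

variable {R : Type*} [Ring R] [Algebra ℝ R] (S : SynapticAlgebra R)

/-- `|a| := (a²)^{1/2}`. -/
def absval (a : R) : R := S.sqrt (a * a)

/-- The positive part `a⁺ := (|a| + a)/2`. -/
noncomputable def pospart (a : R) : R := (2⁻¹ : ℝ) • (S.absval a + a)

/-- The spectral resolution `p_{a,λ} := 1 − ((a − λ)⁺)°`. -/
noncomputable def specProj (a : R) (l : ℝ) : R :=
  1 - S.carr (S.pospart (a - algebraMap ℝ R l))

/-- The spectral order: `a ≤ₛ b` iff `p_{b,λ} ≤ p_{a,λ}` for all real `λ`. -/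
noncomputable def specLE (a b : R) : Prop :=
  ∀ l : ℝ, S.le (S.specProj b l) (S.specProj a l)

/-- Projections of the synaptic algebra. -/
def IsProj (p : R) : Prop := p ∈ S.A ∧ p * p = p

/-- The set `E = {e ∈ A : 0 ≤ e ≤ 1}` of effects. -/
def effects : Set R := {e | e ∈ S.A ∧ S.le 0 e ∧ S.le e 1}

/-- `p` is the infimum of the set `T` in the orthomodular lattice `P` of projections. -/
def IsProjInf (p : R) (T : Set R) : Prop :=
  S.IsProj p ∧ (∀ q ∈ T, S.le p q) ∧ ∀ r, S.IsProj r → (∀ q ∈ T, S.le r q) → S.le r p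

/-- `p` is the supremum of the set `T` in the orthomodular lattice `P` of projections. -/
def IsProjSup (p : R) (T : Set R) : Prop :=
  S.IsProj p ∧ (∀ q ∈ T, S.le q p) ∧ ∀ r, S.IsProj r → (∀ q ∈ T, S.le q r) → S.le p r

/-- A Banach (norm-complete) synaptic algebra: every Cauchy sequence in `A`
(w.r.t. the order-unit norm) converges in norm to an element of `A`. -/
noncomputable def IsBanach : Prop :=
  ∀ f : ℕ → R, (∀ n, f n ∈ S.A) →
    (∀ ε : ℝ, 0 < ε → ∃ N : ℕ, ∀ m ≥ N, ∀ n ≥ N, ouNorm S.le (f m - f n) < ε) →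
    ∃ a ∈ S.A, Filter.Tendsto (fun n => ouNorm S.le (a - f n)) Filter.atTop (nhds 0)

/-- The `λ`-eigenprojection `d_{a,λ} := 1 − (a − λ)°`. -/
noncomputable def eigenProj (a : R) (l : ℝ) : R := 1 - S.carr (a - algebraMap ℝ R l)

/-- The bicommutant `CC(a)` (within `A`). -/
def Bicomm (a : R) : Set R :=
  {b | b ∈ S.A ∧ ∀ c ∈ S.A, a * c = c * a → b * c = c * b}

/-- Projections `p` and `q` are exchanged by a symmetry (`s² = 1`, `sps = q`). -/
def ExchBySymm (p q : R) : Prop := ∃ s ∈ S.A, s * s = 1 ∧ s * p * s = q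

/-- The dimension equivalence on projections: a finite chain of projections, consecutive
ones exchanged by symmetries. -/
def DimEquiv (p q : R) : Prop :=
  ∃ (n : ℕ) (c : ℕ → R), c 0 = p ∧ c n = q ∧ (∀ i ≤ n, S.IsProj (c i)) ∧
    ∀ i < n, S.ExchBySymm (c i) (c (i + 1))

/-- `A` is of finite type iff every projection is finite. -/
def FiniteType : Prop :=
  ∀ p, S.IsProj p → ∀ q, S.IsProj q → S.DimEquiv q p → S.le q p → q = p

/-- The projection lattice `P` is a complete orthomodular lattice: every set of projections
has an infimum and a supremum in `P`. -/
def ProjComplete : Prop :=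
  ∀ T : Set R, (∀ p ∈ T, S.IsProj p) →
    (∃ q, S.IsProjInf q T) ∧ (∃ q, S.IsProjSup q T)

/-- A bounded resolution of identity with bound `K`. -/
def IsBoundedResId (p : ℝ → R) (K : ℝ) : Prop :=
  0 ≤ K ∧ (∀ l, S.IsProj (p l)) ∧
  (∀ l, l < -K → p l = 0) ∧ (∀ l, K ≤ l → p l = 1) ∧
  (∀ l l', l ≤ l' → S.le (p l) (p l')) ∧
  (∀ l, S.IsProjInf (p l) {x | ∃ l' > l, x = p l'})

end SynapticAlgebra

/-- `c` is a regular involution on the subset `T` of the poset `(T, le')`. -/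
def IsRegInvPoset {R : Type*} (le' : R → R → Prop) (T : Set R) (c : R → R) : Prop :=
  (∀ a ∈ T, c a ∈ T) ∧ (∀ a ∈ T, c (c a) = a) ∧
  (∀ a ∈ T, ∀ b ∈ T, le' a b → le' (c b) (c a)) ∧
  (∀ a ∈ T, ∀ b ∈ T, le' a (c a) → le' b (c b) → le' a (c b))

/-- `(T, le', c, 0, 1)` is a Kleene poset: a bounded poset with a regular involution. -/
def IsKleene {R : Type*} [Zero R] [One R] (le' : R → R → Prop) (T : Set R) (c : R → R) : Prop :=
  IsRegInvPoset le' T c ∧ (0 : R) ∈ T ∧ (1 : R) ∈ T ∧ ∀ a ∈ T, le' 0 a ∧ le' a 1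

/-- Every pair of elements of `T` has an infimum and a supremum in `(T, le')`. -/
def HasBinSupInf {R : Type*} (le' : R → R → Prop) (T : Set R) : Prop :=
  ∀ a ∈ T, ∀ b ∈ T,
    (∃ m ∈ T, le' m a ∧ le' m b ∧ ∀ x ∈ T, le' x a → le' x b → le' x m) ∧
    (∃ j ∈ T, le' a j ∧ le' b j ∧ ∀ x ∈ T, le' a x → le' b x → le' j x)

namespace SynAux
set_option linter.unusedSectionVars false
open SynapticAlgebra
variable {R : Type*} [Ring R] [Algebra ℝ R] (S : SynapticAlgebra R)

/-! ### Basic order lemmas -/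

lemma one_nn : S.le 0 (1:R) := by
  have := S.sq_nn 1 S.one_mem; simpa using this

lemma sub_nn {a b : R} (ha : a ∈ S.A) (hb : b ∈ S.A) (h : S.le a b) :
    S.le 0 (b - a) := by
  have := S.add_le_add_right a ha b hb (-a) (S.A.neg_mem ha) h
  simpa [← sub_eq_add_neg] using this

lemma le_of_sub_nn {a b : R} (ha : a ∈ S.A) (hb : b ∈ S.A) (h : S.le 0 (b - a)) :
    S.le a b := by
  have := S.add_le_add_right 0 (S.A.zero_mem) (b - a) (S.A.sub_mem hb ha) a ha h
  simpa using this

lemma add_le_add {a b c d : R} (ha : a ∈ S.A) (hb : b ∈ S.A) (hc : c ∈ S.A) (hd : d ∈ S.A)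
    (h1 : S.le a b) (h2 : S.le c d) : S.le (a + c) (b + d) := by
  have t1 := S.add_le_add_right a ha b hb c hc h1
  have t2 := S.add_le_add_right c hc d hd b hb h2
  have e1 : c + b = b + c := add_comm _ _
  have e2 : d + b = b + d := add_comm _ _
  rw [e1, e2] at t2
  exact S.le_trans _ (S.A.add_mem ha hc) _ (S.A.add_mem hb hc) _ (S.A.add_mem hb hd) t1 t2

lemma add_nn {a b : R} (ha : a ∈ S.A) (hb : b ∈ S.A) (h1 : S.le 0 a) (h2 : S.le 0 b) :
    S.le 0 (a + b) := by
  have := add_le_add S (S.A.zero_mem) ha (S.A.zero_mem) hb h1 h2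
  simpa using this

lemma smul_le {r : ℝ} (hr : 0 ≤ r) {a b : R} (ha : a ∈ S.A) (hb : b ∈ S.A)
    (h : S.le a b) : S.le (r • a) (r • b) := by
  have h1 : S.le 0 (r • (b - a)) :=
    S.smul_nonneg r hr _ (S.A.sub_mem hb ha) (sub_nn S ha hb h)
  rw [smul_sub] at h1
  exact le_of_sub_nn S (S.A.smul_mem r ha) (S.A.smul_mem r hb) h1

lemma smul_one_nn {r : ℝ} (hr : 0 ≤ r) : S.le 0 (r • (1:R)) :=
  S.smul_nonneg r hr 1 S.one_mem (one_nn S)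

lemma smul_one_le_smul_one {r s : ℝ} (h : r ≤ s) : S.le (r • (1:R)) (s • (1:R)) := by
  apply le_of_sub_nn S (S.A.smul_mem r S.one_mem) (S.A.smul_mem s S.one_mem)
  rw [← sub_smul]
  exact smul_one_nn S (by linarith)

lemma le_one_smul_of_le {l : ℝ} (hl : 1 ≤ l) {a : R} (ha : a ∈ S.A) (h : S.le a 1) :
    S.le a (l • (1:R)) := by
  have : S.le ((1:ℝ) • (1:R)) (l • (1:R)) := smul_one_le_smul_one S hl
  rw [one_smul] at this
  exact S.le_trans _ ha _ S.one_mem _ (S.A.smul_mem l S.one_mem) h this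

/-- Archimedean property, ε-form. -/
lemma arch' {x : R} (hx : x ∈ S.A) (h : ∀ ε : ℝ, 0 < ε → S.le 0 (x + ε • (1:R))) :
    S.le 0 x := by
  have key : S.le (-x) 0 := by
    apply S.arch (-x) (S.A.neg_mem hx) 1 S.one_mem
    intro n
    rcases Nat.eq_zero_or_pos n with h0 | hpos
    · subst h0; simpa using one_nn S
    · have hn : (0:ℝ) < n := by exact_mod_cast hpos
      have h1 := h ((1:ℝ) / n) (by positivity)
      have h2 : S.le 0 ((n:ℝ) • (x + ((1:ℝ)/n) • (1:R))) :=
        S.smul_nonneg _ (le_of_lt hn) _ (S.A.add_mem hx (S.A.smul_mem _ S.one_mem)) h1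
      rw [smul_add, smul_smul] at h2
      have : (n:ℝ) * ((1:ℝ)/n) = 1 := by field_simp
      rw [this, one_smul] at h2
      have h3 := S.add_le_add_right 0 S.A.zero_mem ((n:ℝ) • x + 1)
        (S.A.add_mem (S.A.smul_mem _ hx) S.one_mem) (-((n:ℝ) • x))
        (S.A.neg_mem (S.A.smul_mem _ hx)) h2
      have e : (n:ℝ) • x + 1 + -((n:ℝ) • x) = 1 := by abel
      rw [e, zero_add] at h3
      simpa [smul_neg] using h3
  have := S.add_le_add_right (-x) (S.A.neg_mem hx) 0 S.A.zero_mem x hx key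
  simpa using this

end SynAux
namespace SynAux
set_option linter.unusedSectionVars false
variable {R : Type*} [Ring R] [Algebra ℝ R] (S : SynapticAlgebra R)

/-! ### Products and positivity -/

lemma jordan_mem {a b : R} (ha : a ∈ S.A) (hb : b ∈ S.A) : a * b + b * a ∈ S.A := by
  have h : a * b + b * a = (a + b) * (a + b) - a * a - b * b := by noncomm_ring
  rw [h]
  exact S.A.sub_mem (S.A.sub_mem (S.sq_mem _ (S.A.add_mem ha hb)) (S.sq_mem _ ha)) (S.sq_mem _ hb)

lemma mul_mem_comm {a b : R} (ha : a ∈ S.A) (hb : b ∈ S.A) (hc : a * b = b * a) :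
    a * b ∈ S.A := by
  have h2 : a * b + b * a = (2:ℝ) • (a * b) := by rw [← hc, two_smul]
  have h3 : a * b = (2⁻¹:ℝ) • (a * b + b * a) := by
    rw [h2, smul_smul]; norm_num
  rw [h3]
  exact S.A.smul_mem _ (jordan_mem S ha hb)

lemma eq_zero_of_sq {x : R} (hx : x ∈ S.A) (h : x * x = 0) : x = 0 := by
  have h1 : x * 1 * x = 0 := by simpa using h
  have := (S.quad_zero x hx 1 S.one_mem (one_nn S) h1).1
  simpa using this

lemma one_sub_idem {p : R} (hp : p * p = p) : (1 - p) * (1 - p) = 1 - p := by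
  have : (1 - p) * (1 - p) = 1 - p - p + p * p := by noncomm_ring
  rw [this, hp]; abel

lemma proj_nn {p : R} (hpA : p ∈ S.A) (hp : p * p = p) : S.le 0 p := by
  have := S.sq_nn p hpA; rwa [hp] at this

lemma proj_le_one {p : R} (hpA : p ∈ S.A) (hp : p * p = p) : S.le p 1 := by
  apply le_of_sub_nn S hpA S.one_mem
  exact proj_nn S (S.A.sub_mem S.one_mem hpA) (one_sub_idem hp)

lemma zero_comm {a b : R} (ha : a ∈ S.A) (hb : b ∈ S.A) (hann : S.le 0 a)
    (h : a * b = 0) : b * a = 0 := by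
  have h1 : b * a * b = 0 := by rw [mul_assoc, h, mul_zero]
  exact (S.quad_zero b hb a ha hann h1).1

lemma proj_zero_comm {p a : R} (hpA : p ∈ S.A) (hp : p * p = p) (ha : a ∈ S.A)
    (h : a * p = 0) : p * a = 0 := by
  have hmem : p * a ∈ S.A := by
    have heq : p * a = (p * a + a * p) - a * p := by abel
    rw [heq, h, sub_zero, add_zero]
    have := jordan_mem S hpA ha
    rwa [h, add_zero] at this
  apply eq_zero_of_sq S hmem
  have : (p * a) * (p * a) = p * (a * p) * a := by noncomm_ring
  rw [this, h, mul_zero, zero_mul]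

lemma proj_zero_comm' {p a : R} (hpA : p ∈ S.A) (hp : p * p = p) (ha : a ∈ S.A)
    (h : p * a = 0) : a * p = 0 := by
  have hmem : a * p ∈ S.A := by
    have heq : a * p = (p * a + a * p) - p * a := by abel
    rw [heq, h, sub_zero, zero_add]
    have := jordan_mem S hpA ha
    rwa [h, zero_add] at this
  apply eq_zero_of_sq S hmem
  have : (a * p) * (a * p) = a * (p * a) * p := by noncomm_ring
  rw [this, h, mul_zero, zero_mul]

lemma inv_nonneg {a w : R} (ha : a ∈ S.A) (hann : S.le 0 a) (hw : w ∈ S.A)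
    (hwa : w * a = 1) (haw : a * w = 1) : S.le 0 w := by
  set r := S.sqrt a with hr
  have hrA : r ∈ S.A := S.sqrt_mem a ha hann
  have hrnn : S.le 0 r := S.sqrt_nn a ha hann
  have hrsq : r * r = a := S.sqrt_sq a ha hann
  have hcomm : a * w = w * a := by rw [haw, hwa]
  have hrw : r * w = w * r := S.sqrt_bicomm a ha hann w hw hcomm
  have hq : S.le 0 (w * w) := S.sq_nn w hw
  have key : r * (w * w) * r = w := by
    have h1 : r * (w * w) * r = (r * w) * (w * r) := by noncomm_ring
    rw [hrw] at h1
    have h2 : (w * r) * (w * r) = w * (r * w) * r := by noncomm_ring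
    rw [hrw] at h2
    have h3 : w * (w * r) * r = (w * w) * (r * r) := by noncomm_ring
    rw [h1, h2, h3, hrsq, mul_assoc, hwa, mul_one]
  have := S.quad_nn r hrA (w * w) (S.sq_mem w hw) hrnn hq
  rwa [key] at this

lemma inv_exists' {a : R} (ha : a ∈ S.A) {ε : ℝ} (hε : 0 < ε)
    (h : S.le (ε • (1:R)) a) :
    ∃ w ∈ S.A, w * a = 1 ∧ a * w = 1 ∧ S.le 0 w := by
  have hone : S.le 1 (ε⁻¹ • a) := by
    have := smul_le S (r := ε⁻¹) (by positivity) (S.A.smul_mem ε S.one_mem) ha h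
    rwa [smul_smul, inv_mul_cancel₀ (ne_of_gt hε), one_smul] at this
  obtain ⟨b, hbA, hb1, hb2⟩ := S.inv_exists (ε⁻¹ • a) (S.A.smul_mem _ ha) hone
  have hwa : (ε⁻¹ • b) * a = 1 := by
    have heq : (ε⁻¹ • b) * a = b * (ε⁻¹ • a) := by
      rw [smul_mul_assoc, mul_smul_comm]
    rw [heq, hb2]
  have haw : a * (ε⁻¹ • b) = 1 := by
    have heq : a * (ε⁻¹ • b) = (ε⁻¹ • a) * b := by
      rw [smul_mul_assoc, mul_smul_comm]
    rw [heq, hb1]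
  have hann : S.le 0 a :=
    S.le_trans 0 S.A.zero_mem _ (S.A.smul_mem _ S.one_mem) a ha
      (smul_one_nn S (le_of_lt hε)) h
  exact ⟨ε⁻¹ • b, S.A.smul_mem _ hbA, hwa, haw,
    inv_nonneg S ha hann (S.A.smul_mem _ hbA) hwa haw⟩

end SynAux
namespace SynAux
set_option linter.unusedSectionVars false
set_option linter.unusedVariables false
variable {R : Type*} [Ring R] [Algebra ℝ R] (S : SynapticAlgebra R)

/-- General SA3: `a b a ≥ 0` for arbitrary `a ∈ A` and `b ≥ 0`. -/
lemma quad_nn' {a b : R} (ha : a ∈ S.A) (hb : b ∈ S.A) (hbnn : S.le 0 b) :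
    S.le 0 (a * b * a) := by
  obtain ⟨n, hn⟩ := S.one_order_unit (a * a) (S.sq_mem a ha)
  apply arch' S (S.quad_mem a ha b hb)
  intro δ hδ
  set ε : ℝ := δ / (n + 1) with hεdef
  have hε : 0 < ε := by positivity
  set c' := b + ε • (1:R) with hc'
  have hc'A : c' ∈ S.A := S.A.add_mem hb (S.A.smul_mem _ S.one_mem)
  have hc'ge : S.le (ε • (1:R)) c' := by
    have := S.add_le_add_right 0 S.A.zero_mem b hb (ε • (1:R)) (S.A.smul_mem _ S.one_mem) hbnn
    simpa [hc', add_comm] using this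
  have hc'nn : S.le 0 c' := S.le_trans 0 S.A.zero_mem _ (S.A.smul_mem _ S.one_mem) _ hc'A
    (smul_one_nn S hε.le) hc'ge
  obtain ⟨w, hwA, hwc, hcw, hwnn⟩ := inv_exists' S hc'A hε hc'ge
  set c := S.sqrt c' with hcdf
  have hcA : c ∈ S.A := S.sqrt_mem _ hc'A hc'nn
  have hcnn : S.le 0 c := S.sqrt_nn _ hc'A hc'nn
  have hcsq : c * c = c' := S.sqrt_sq _ hc'A hc'nn
  have hcomm : c' * w = w * c' := by rw [hcw, hwc]
  have hcwcomm : c * w = w * c := S.sqrt_bicomm c' hc'A hc'nn w hwA hcomm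
  have hvA : c * w ∈ S.A := mul_mem_comm S hcA hwA hcwcomm
  have hcv : c * (c * w) = 1 := by
    rw [← mul_assoc, hcsq, hcw]
  have hvc : (c * w) * c = 1 := by
    rw [hcwcomm, mul_assoc, hcsq, hwc]
  have hvnn : S.le 0 (c * w) := inv_nonneg S hcA hcnn hvA hvc hcv
  set z := c * a * c with hz
  have hzA : z ∈ S.A := S.quad_mem c hcA a ha
  set x := a * c' * a with hx
  have hxA : x ∈ S.A := S.quad_mem a ha c' hc'A
  have hzz : z * z = c * x * c := by
    have h1 : (c * a * c) * (c * a * c) = c * (a * (c * c) * a) * c := by noncomm_ring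
    rw [hz, hx, h1, hcsq]
  have hzznn : S.le 0 (z * z) := S.sq_nn z hzA
  have hkey : (c * w) * (c * x * c) * (c * w) = x := by
    have h1 : (c * w) * (c * x * c) * (c * w) = ((c * w) * c) * x * (c * (c * w)) := by
      noncomm_ring
    rw [h1, hvc, hcv, one_mul, mul_one]
  have hxnn : S.le 0 x := by
    have := S.quad_nn (c * w) hvA (z * z) (S.sq_mem z hzA) hvnn hzznn
    rw [hzz, hkey] at this
    exact this
  have hexp : x = a * b * a + ε • (a * a) := by
    rw [hx, hc', mul_add, add_mul, mul_smul_comm, smul_mul_assoc, mul_one]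
  have h1 : S.le (ε • (a * a)) (δ • (1:R)) := by
    have h2 : S.le (ε • (a * a)) (ε • ((n:ℝ) • (1:R))) :=
      smul_le S hε.le (S.sq_mem a ha) (S.A.smul_mem _ S.one_mem) hn
    rw [smul_smul] at h2
    have h3 : S.le ((ε * n) • (1:R)) (δ • (1:R)) := by
      apply smul_one_le_smul_one
      rw [hεdef]
      rw [div_mul_eq_mul_div, div_le_iff₀ (by positivity)]
      nlinarith [hδ.le]
    exact S.le_trans _ (S.A.smul_mem _ (S.sq_mem a ha)) _ (S.A.smul_mem _ S.one_mem) _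
      (S.A.smul_mem _ S.one_mem) h2 h3
  have h4 : S.le (a * b * a + ε • (a * a)) (a * b * a + δ • (1:R)) := by
    apply add_le_add S (S.quad_mem a ha b hb) (S.quad_mem a ha b hb)
      (S.A.smul_mem _ (S.sq_mem a ha)) (S.A.smul_mem _ S.one_mem)
      (S.le_refl _ (S.quad_mem a ha b hb)) h1
  rw [hexp] at hxnn
  exact S.le_trans 0 S.A.zero_mem _ (S.A.add_mem (S.quad_mem a ha b hb)
    (S.A.smul_mem _ (S.sq_mem a ha))) _ (S.A.add_mem (S.quad_mem a ha b hb)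
    (S.A.smul_mem _ S.one_mem)) hxnn h4

lemma conj_le {a b c : R} (ha : a ∈ S.A) (hb : b ∈ S.A) (hc : c ∈ S.A)
    (h : S.le a b) : S.le (c * a * c) (c * b * c) := by
  apply le_of_sub_nn S (S.quad_mem c hc a ha) (S.quad_mem c hc b hb)
  have heq : c * b * c - c * a * c = c * (b - a) * c := by noncomm_ring
  rw [heq]
  exact quad_nn' S hc (S.A.sub_mem hb ha) (sub_nn S ha hb h)

end SynAux
namespace SynAux
set_option linter.unusedSectionVars false
set_option linter.unusedVariables false
variable {R : Type*} [Ring R] [Algebra ℝ R] (S : SynapticAlgebra R)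

/-! ### Carrier lemmas -/

lemma mul_carr {a : R} (ha : a ∈ S.A) : a * S.carr a = a := by
  have h0 : S.carr a * (1 - S.carr a) = 0 := by
    rw [mul_sub, mul_one, S.carr_idem a ha, sub_self]
  have h1 : a * (1 - S.carr a) = 0 :=
    (S.carr_spec a ha (1 - S.carr a) (S.A.sub_mem S.one_mem (S.carr_mem a ha))).mpr h0
  rw [mul_sub, mul_one, sub_eq_zero] at h1
  exact h1.symm

lemma carr_mul {a : R} (ha : a ∈ S.A) : S.carr a * a = a := by
  have h1 : a * (1 - S.carr a) = 0 := by
    rw [mul_sub, mul_one, mul_carr S ha, sub_self]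
  have h2 : (1 - S.carr a) * a = 0 :=
    proj_zero_comm S (S.A.sub_mem S.one_mem (S.carr_mem a ha))
      (one_sub_idem (S.carr_idem a ha)) ha h1
  rw [sub_mul, one_mul, sub_eq_zero] at h2
  exact h2.symm

lemma carr_nn {a : R} (ha : a ∈ S.A) : S.le 0 (S.carr a) :=
  proj_nn S (S.carr_mem a ha) (S.carr_idem a ha)

lemma carr_le_one {a : R} (ha : a ∈ S.A) : S.le (S.carr a) 1 :=
  proj_le_one S (S.carr_mem a ha) (S.carr_idem a ha)

/-- Uniqueness of the carrier. -/
lemma carr_eq {a q : R} (ha : a ∈ S.A) (hqA : q ∈ S.A) (hq : q * q = q)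
    (hiff : ∀ b ∈ S.A, (a * b = 0 ↔ q * b = 0)) : S.carr a = q := by
  set p := S.carr a with hp
  have hpA : p ∈ S.A := S.carr_mem a ha
  have hpq : p * q = p := by
    have h1 : a * (1 - q) = 0 := by
      apply (hiff (1 - q) (S.A.sub_mem S.one_mem hqA)).mpr
      rw [mul_sub, mul_one, hq, sub_self]
    have h2 : p * (1 - q) = 0 :=
      (S.carr_spec a ha (1 - q) (S.A.sub_mem S.one_mem hqA)).mp h1
    rw [mul_sub, mul_one, sub_eq_zero] at h2
    exact h2.symm
  have hqp : q * p = q := by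
    have h1 : a * (1 - p) = 0 := by
      rw [mul_sub, mul_one, mul_carr S ha, sub_self]
    have h2 : q * (1 - p) = 0 := (hiff (1 - p) (S.A.sub_mem S.one_mem hpA)).mp h1
    rw [mul_sub, mul_one, sub_eq_zero] at h2
    exact h2.symm
  -- from q * (1 - p) = 0 get (1 - p) * q = 0, i.e. p * q = q
  have h3 : q * (1 - p) = 0 := by rw [mul_sub, mul_one, hqp, sub_self]
  have h4 : (1 - p) * q = 0 :=
    proj_zero_comm S (S.A.sub_mem S.one_mem hpA)
      (one_sub_idem (S.carr_idem a ha)) hqA h3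
  rw [sub_mul, one_mul, sub_eq_zero] at h4
  rw [← hpq, ← h4]

lemma carr_smul {a : R} (ha : a ∈ S.A) {r : ℝ} (hr : r ≠ 0) :
    S.carr (r • a) = S.carr a := by
  apply carr_eq S (S.A.smul_mem r ha) (S.carr_mem a ha) (S.carr_idem a ha)
  intro b hbB
  rw [smul_mul_assoc]
  constructor
  · intro h
    have h2 : a * b = 0 := by
      have := congrArg (fun z => r⁻¹ • z) h
      simpa [smul_smul, inv_mul_cancel₀ hr] using this
    exact (S.carr_spec a ha b hbB).mp h2
  · intro h
    have h2 : a * b = 0 := (S.carr_spec a ha b hbB).mpr h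
    rw [h2, smul_zero]

lemma carr_proj {p : R} (hpA : p ∈ S.A) (hp : p * p = p) : S.carr p = p :=
  carr_eq S hpA hpA hp (fun b _ => Iff.rfl)

lemma carr_zero : S.carr (0:R) = 0 := by
  have h := (S.carr_spec 0 S.A.zero_mem 1 S.one_mem).mp (by rw [zero_mul])
  rwa [mul_one] at h

lemma carr_eq_one {a : R} (ha : a ∈ S.A) {ε : ℝ} (hε : 0 < ε)
    (h : S.le (ε • (1:R)) a) : S.carr a = 1 := by
  obtain ⟨w, hwA, hwa, haw, hwnn⟩ := inv_exists' S ha hε h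
  have h1 : a * (1 - S.carr a) = 0 := by
    rw [mul_sub, mul_one, mul_carr S ha, sub_self]
  have h2 : w * (a * (1 - S.carr a)) = 0 := by rw [h1, mul_zero]
  rw [← mul_assoc, hwa, one_mul, sub_eq_zero] at h2
  exact h2.symm

lemma carr_mono {a b : R} (ha : a ∈ S.A) (hb : b ∈ S.A) (hann : S.le 0 a)
    (hab : S.le a b) : S.le (S.carr a) (S.carr b) := by
  set q := S.carr b with hq
  have hqA : q ∈ S.A := S.carr_mem b hb
  have h1A : (1 - q) ∈ S.A := S.A.sub_mem S.one_mem hqA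
  have h1idem : (1 - q) * (1 - q) = 1 - q := one_sub_idem (S.carr_idem b hb)
  have hbq : b * (1 - q) = 0 := by
    rw [mul_sub, mul_one, mul_carr S hb, sub_self]
  have hqb : (1 - q) * b = 0 := proj_zero_comm S h1A h1idem hb hbq
  have ht0 : (1 - q) * b * (1 - q) = 0 := by rw [hqb, zero_mul]
  have htle : S.le ((1 - q) * a * (1 - q)) ((1 - q) * b * (1 - q)) :=
    conj_le S ha hb h1A hab
  have htnn : S.le 0 ((1 - q) * a * (1 - q)) :=
    quad_nn' S h1A ha hann
  have ht : (1 - q) * a * (1 - q) = 0 := by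
    apply S.le_antisymm _ (S.quad_mem _ h1A a ha) 0 S.A.zero_mem
    · rw [← ht0]; exact htle
    · exact htnn
  have h5 := S.quad_zero (1 - q) h1A a ha hann ht
  have h6 : S.carr a * (1 - q) = 0 := by
    have := h5.2  -- a * (1 - q) = 0
    exact (S.carr_spec a ha (1 - q) h1A).mp this
  rw [mul_sub, mul_one, sub_eq_zero] at h6
  -- carr a * q = carr a ⇒ carr a ≤ q
  apply le_of_sub_nn S (S.carr_mem a ha) hqA
  have hqca : q * S.carr a = S.carr a := by
    have h7 : S.carr a * (1 - q) = 0 := by rw [mul_sub, mul_one, ← h6, sub_self]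
    have h8 : (1 - q) * S.carr a = 0 :=
      proj_zero_comm S h1A h1idem (S.carr_mem a ha) h7
    rw [sub_mul, one_mul, sub_eq_zero] at h8
    exact h8.symm
  have he : q - S.carr a = q * (1 - S.carr a) * q := by
    have h9 : q * (1 - S.carr a) * q = q * q - q * (S.carr a * q) := by noncomm_ring
    rw [h9, S.carr_idem b hb, ← h6, hqca, ← hq]
  rw [he]
  exact S.quad_nn q hqA (1 - S.carr a) (S.A.sub_mem S.one_mem (S.carr_mem a ha))
    (carr_nn S hb) (proj_nn S (S.A.sub_mem S.one_mem (S.carr_mem a ha))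
      (one_sub_idem (S.carr_idem a ha)))

lemma carr_comm {a c : R} (ha : a ∈ S.A) (hann : S.le 0 a) (hc : c ∈ S.A)
    (hcomm : c * a = a * c) : c * S.carr a = S.carr a * c := by
  set p := S.carr a with hp
  have hpA : p ∈ S.A := S.carr_mem a ha
  have hpidem : p * p = p := S.carr_idem a ha
  have h1A : (1 - p) ∈ S.A := S.A.sub_mem S.one_mem hpA
  have hap : a * (1 - p) = 0 := by rw [mul_sub, mul_one, mul_carr S ha, sub_self]
  have hpa : (1 - p) * a = 0 := by rw [sub_mul, one_mul, carr_mul S ha, sub_self]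
  set j := c * (1 - p) + (1 - p) * c with hj
  have hjA : j ∈ S.A := jordan_mem S hc h1A
  have haj : a * j = 0 := by
    rw [hj, mul_add, ← mul_assoc, ← hcomm, mul_assoc, hap, mul_zero,
      ← mul_assoc, hap, zero_mul, add_zero]
  have hpj : p * j = 0 := (S.carr_spec a ha j hjA).mp haj
  have hjp : j * p = 0 := proj_zero_comm' S hpA hpidem hjA hpj
  -- p * j = 0 gives p*c*(1-p) = 0 ; j * p = 0 gives (1-p)*c*p = 0
  have h2 : p * c * (1 - p) = 0 := by
    have : p * j = p * (c * (1 - p)) + (p * (1 - p)) * c := by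
      rw [hj, mul_add, ← mul_assoc, ← mul_assoc]
    rw [hpj] at this
    have hp1p : p * (1 - p) = 0 := by rw [mul_sub, mul_one, hpidem, sub_self]
    rw [hp1p, zero_mul, add_zero, ← mul_assoc] at this
    exact this.symm
  have h3 : (1 - p) * c * p = 0 := by
    have hthis : j * p = c * ((1 - p) * p) + (1 - p) * c * p := by
      rw [hj]; noncomm_ring
    rw [hjp] at hthis
    have h1pp : (1 - p) * p = 0 := by rw [sub_mul, one_mul, hpidem, sub_self]
    rw [h1pp, mul_zero, zero_add] at hthis
    exact hthis.symm
  have e2 : p * c = p * c * p := by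
    have hh : p * c - p * c * p = p * c * (1 - p) := by noncomm_ring
    rw [h2] at hh
    exact (sub_eq_zero.mp hh)
  have e3 : c * p = p * c * p := by
    have hh : c * p - p * c * p = (1 - p) * c * p := by noncomm_ring
    rw [h3] at hh
    exact (sub_eq_zero.mp hh)
  rw [e3, ← e2]

end SynAux
namespace SynAux
set_option linter.unusedSectionVars false
set_option linter.unusedVariables false
variable {R : Type*} [Ring R] [Algebra ℝ R] (S : SynapticAlgebra R)

/-! ### Projection and effect order lemmas -/

lemma proj_le_of_mul {p q : R} (hpA : p ∈ S.A) (hp : p * p = p)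
    (hqA : q ∈ S.A) (hq : q * q = q) (h : p * q = p) : S.le p q := by
  have h1 : p * (1 - q) = 0 := by rw [mul_sub, mul_one, h, sub_self]
  have h2 : (1 - q) * p = 0 :=
    proj_zero_comm S (S.A.sub_mem S.one_mem hqA) (one_sub_idem hq) hpA h1
  have hqp : q * p = p := by
    rw [sub_mul, one_mul, sub_eq_zero] at h2
    exact h2.symm
  apply le_of_sub_nn S hpA hqA
  have he : q - p = q * (1 - p) * q := by
    have h3 : q * (1 - p) * q = q * q - q * p * q := by noncomm_ring
    rw [h3, hq, hqp, h]
  rw [he]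
  exact S.quad_nn q hqA (1 - p) (S.A.sub_mem S.one_mem hpA) (proj_nn S hqA hq)
    (proj_nn S (S.A.sub_mem S.one_mem hpA) (one_sub_idem hp))

lemma proj_le_of_mul' {p q : R} (hpA : p ∈ S.A) (hp : p * p = p)
    (hqA : q ∈ S.A) (hq : q * q = q) (h : q * p = p) : S.le p q := by
  have h1 : (1 - q) * p = 0 := by rw [sub_mul, one_mul, h, sub_self]
  have h2 : p * (1 - q) = 0 :=
    proj_zero_comm' S (S.A.sub_mem S.one_mem hqA) (one_sub_idem hq) hpA h1
  have hpq : p * q = p := by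
    rw [mul_sub, mul_one, sub_eq_zero] at h2
    exact h2.symm
  exact proj_le_of_mul S hpA hp hqA hq hpq

lemma proj_mul_of_le {p q : R} (hpA : p ∈ S.A) (hp : p * p = p)
    (hqA : q ∈ S.A) (hq : q * q = q) (h : S.le p q) :
    p * q = p ∧ q * p = p := by
  have h1A : (1 - q) ∈ S.A := S.A.sub_mem S.one_mem hqA
  have ht0 : (1 - q) * q * (1 - q) = 0 := by
    have : (1 - q) * q = 0 := by rw [sub_mul, one_mul, hq, sub_self]
    rw [this, zero_mul]
  have htle : S.le ((1 - q) * p * (1 - q)) ((1 - q) * q * (1 - q)) :=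
    conj_le S hpA hqA h1A h
  have htnn : S.le 0 ((1 - q) * p * (1 - q)) :=
    S.quad_nn _ h1A p hpA (proj_nn S h1A (one_sub_idem hq)) (proj_nn S hpA hp)
  have ht : (1 - q) * p * (1 - q) = 0 := by
    apply S.le_antisymm _ (S.quad_mem _ h1A p hpA) 0 S.A.zero_mem
    · rw [← ht0]; exact htle
    · exact htnn
  have h5 := S.quad_zero (1 - q) h1A p hpA (proj_nn S hpA hp) ht
  constructor
  · have := h5.2
    rw [mul_sub, mul_one, sub_eq_zero] at this
    exact this.symm
  · have := h5.1
    rw [sub_mul, one_mul, sub_eq_zero] at this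
    exact this.symm

lemma eff_le_proj_mul {e q : R} (heA : e ∈ S.A) (henn : S.le 0 e)
    (hqA : q ∈ S.A) (hq : q * q = q) (h : S.le e q) :
    q * e = e ∧ e * q = e := by
  have h1A : (1 - q) ∈ S.A := S.A.sub_mem S.one_mem hqA
  have ht0 : (1 - q) * q * (1 - q) = 0 := by
    have : (1 - q) * q = 0 := by rw [sub_mul, one_mul, hq, sub_self]
    rw [this, zero_mul]
  have htle : S.le ((1 - q) * e * (1 - q)) ((1 - q) * q * (1 - q)) :=
    conj_le S heA hqA h1A h
  have htnn : S.le 0 ((1 - q) * e * (1 - q)) :=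
    S.quad_nn _ h1A e heA (proj_nn S h1A (one_sub_idem hq)) henn
  have ht : (1 - q) * e * (1 - q) = 0 := by
    apply S.le_antisymm _ (S.quad_mem _ h1A e heA) 0 S.A.zero_mem
    · rw [← ht0]; exact htle
    · exact htnn
  have h5 := S.quad_zero (1 - q) h1A e heA henn ht
  constructor
  · have := h5.1
    rw [sub_mul, one_mul, sub_eq_zero] at this
    exact this.symm
  · have := h5.2
    rw [mul_sub, mul_one, sub_eq_zero] at this
    exact this.symm

lemma eff_le_proj_of_mul {e q : R} (heA : e ∈ S.A) (hele : S.le e 1)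
    (hqA : q ∈ S.A) (hq : q * q = q) (h1 : q * e = e) (h2 : e * q = e) :
    S.le e q := by
  apply le_of_sub_nn S heA hqA
  have he : q - e = q * (1 - e) * q := by
    have h3 : q * (1 - e) * q = q * q - q * e * q := by noncomm_ring
    rw [h3, hq, h1, h2]
  rw [he]
  exact S.quad_nn q hqA (1 - e) (S.A.sub_mem S.one_mem heA) (proj_nn S hqA hq)
    (sub_nn S heA S.one_mem hele)

lemma proj_le_eff_mul {p f : R} (hpA : p ∈ S.A) (hp : p * p = p)
    (hfA : f ∈ S.A) (hfle : S.le f 1) (h : S.le p f) :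
    p * f = p ∧ f * p = p := by
  have ht0 : p * (1 - p) * p = 0 := by
    have : p * (1 - p) = 0 := by rw [mul_sub, mul_one, hp, sub_self]
    rw [this, zero_mul]
  have hle1f : S.le (1 - f) (1 - p) := by
    apply le_of_sub_nn S (S.A.sub_mem S.one_mem hfA) (S.A.sub_mem S.one_mem hpA)
    have : (1 - p) - (1 - f) = f - p := by abel
    rw [this]
    exact sub_nn S hpA hfA h
  have htle : S.le (p * (1 - f) * p) (p * (1 - p) * p) :=
    conj_le S (S.A.sub_mem S.one_mem hfA) (S.A.sub_mem S.one_mem hpA) hpA hle1f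
  have htnn : S.le 0 (p * (1 - f) * p) :=
    S.quad_nn p hpA (1 - f) (S.A.sub_mem S.one_mem hfA) (proj_nn S hpA hp)
      (sub_nn S hfA S.one_mem hfle)
  have ht : p * (1 - f) * p = 0 := by
    apply S.le_antisymm _ (S.quad_mem p hpA _ (S.A.sub_mem S.one_mem hfA)) 0 S.A.zero_mem
    · rw [← ht0]; exact htle
    · exact htnn
  have h5 := S.quad_zero p hpA (1 - f) (S.A.sub_mem S.one_mem hfA)
    (sub_nn S hfA S.one_mem hfle) ht
  constructor
  · have := h5.1
    rw [mul_sub, mul_one, sub_eq_zero] at this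
    exact this.symm
  · have := h5.2
    rw [sub_mul, one_mul, sub_eq_zero] at this
    exact this.symm

lemma proj_le_eff_of_mul {p f : R} (hpA : p ∈ S.A) (hp : p * p = p)
    (hfA : f ∈ S.A) (hfnn : S.le 0 f) (h1 : f * p = p) (h2 : p * f = p) :
    S.le p f := by
  apply le_of_sub_nn S hpA hfA
  have he : f - p = (1 - p) * f * (1 - p) := by
    have h3 : (1 - p) * f * (1 - p) = f - p * f - f * p + p * (f * p) := by noncomm_ring
    rw [h3, h1, h2, hp]
    abel
  rw [he]
  exact S.quad_nn (1 - p) (S.A.sub_mem S.one_mem hpA) f hfA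
    (proj_nn S (S.A.sub_mem S.one_mem hpA) (one_sub_idem hp)) hfnn

end SynAux
namespace SynAux
set_option linter.unusedSectionVars false
set_option linter.unusedVariables false
variable {R : Type*} [Ring R] [Algebra ℝ R] (S : SynapticAlgebra R)

/-! ### Square roots and absolute values -/

/-- The product of two commuting nonnegative elements is nonnegative. -/
lemma mul_nn_comm {u v : R} (hu : u ∈ S.A) (hv : v ∈ S.A) (hunn : S.le 0 u)
    (hvnn : S.le 0 v) (hcomm : u * v = v * u) : S.le 0 (u * v) := by
  set r := S.sqrt u with hr
  have hrA : r ∈ S.A := S.sqrt_mem u hu hunn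
  have hrnn : S.le 0 r := S.sqrt_nn u hu hunn
  have hrsq : r * r = u := S.sqrt_sq u hu hunn
  have hrv : r * v = v * r := S.sqrt_bicomm u hu hunn v hv hcomm
  have key : r * v * r = u * v := by
    rw [mul_assoc, ← hrv, ← mul_assoc, hrsq]
  have := S.quad_nn r hrA v hv hrnn hvnn
  rwa [key] at this

lemma neg_nonpos {s : R} (hs : s ∈ S.A) (h : S.le 0 s) : S.le (-s) 0 := by
  apply le_of_sub_nn S (S.A.neg_mem hs) S.A.zero_mem
  simpa using h

/-- Uniqueness of commuting nonnegative square roots. -/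
lemma sqrt_unique_comm {u v : R} (hu : u ∈ S.A) (hv : v ∈ S.A) (hunn : S.le 0 u)
    (hvnn : S.le 0 v) (hcomm : u * v = v * u) (hsq : u * u = v * v) : u = v := by
  set w := u - v with hw
  have hwA : w ∈ S.A := S.A.sub_mem hu hv
  have hwu : w * (u + v) = 0 := by
    have h : w * (u + v) = u * u + u * v - v * u - v * v := by rw [hw]; noncomm_ring
    rw [h, hcomm, hsq]; abel
  have huw : (u + v) * w = 0 := by
    have h : (u + v) * w = u * u - u * v + v * u - v * v := by rw [hw]; noncomm_ring
    rw [h, hcomm, hsq]; abel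
  have hwv : w * v = -(w * u) := by
    have h : w * u + w * v = 0 := by rw [← mul_add, hwu]
    exact eq_neg_of_add_eq_zero_right h
  have hvw : v * w = -(u * w) := by
    have h : u * w + v * w = 0 := by rw [← add_mul, huw]
    exact eq_neg_of_add_eq_zero_right h
  have hww1 : w * w = w * u + w * u := by
    have h : w * w = w * u - w * v := by rw [hw]; noncomm_ring
    rw [h, hwv, sub_neg_eq_add]
  have hww2 : w * w = -(v * w) + -(v * w) := by
    have h : w * w = u * w - v * w := by rw [hw]; noncomm_ring
    have h2 : u * w = -(v * w) := by rw [hvw, neg_neg]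
    rw [h, h2, sub_eq_add_neg]
  set X := w * (u * v) * w with hX
  have hXA : X ∈ S.A := S.quad_mem w hwA (u * v) (mul_mem_comm S hu hv hcomm)
  have hXnn : S.le 0 X := quad_nn' S hwA (mul_mem_comm S hu hv hcomm)
    (mul_nn_comm S hu hv hunn hvnn hcomm)
  have hXeq : (w * u) * (v * w) = X := by rw [hX]; noncomm_ring
  have h4 : (w * w) * (w * w) = -(X + X + X + X) := by
    calc (w * w) * (w * w) = (w * u + w * u) * (-(v * w) + -(v * w)) := by
          rw [← hww1, ← hww2]
      _ = -((w * u) * (v * w) + (w * u) * (v * w) + (w * u) * (v * w) + (w * u) * (v * w)) := by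
          noncomm_ring
      _ = -(X + X + X + X) := by rw [hXeq]
  have hsum_nn : S.le 0 (X + X + X + X) :=
    add_nn S (S.A.add_mem (S.A.add_mem hXA hXA) hXA) hXA
      (add_nn S (S.A.add_mem hXA hXA) hXA (add_nn S hXA hXA hXnn hXnn) hXnn) hXnn
  have hle0 : S.le ((w * w) * (w * w)) 0 := by
    rw [h4]
    exact neg_nonpos S (S.A.add_mem (S.A.add_mem (S.A.add_mem hXA hXA) hXA) hXA) hsum_nn
  have hge0 : S.le 0 ((w * w) * (w * w)) := S.sq_nn (w * w) (S.sq_mem w hwA)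
  have hzero : (w * w) * (w * w) = 0 :=
    S.le_antisymm _ (S.sq_mem (w * w) (S.sq_mem w hwA)) 0 S.A.zero_mem hle0 hge0
  have hw2 : w * w = 0 := eq_zero_of_sq S (S.sq_mem w hwA) hzero
  have : w = 0 := eq_zero_of_sq S hwA hw2
  rw [hw] at this
  exact sub_eq_zero.mp this

/-! ### Absolute value -/

lemma abs_mem {a : R} (ha : a ∈ S.A) : S.absval a ∈ S.A :=
  S.sqrt_mem (a * a) (S.sq_mem a ha) (S.sq_nn a ha)

lemma abs_nn {a : R} (ha : a ∈ S.A) : S.le 0 (S.absval a) :=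
  S.sqrt_nn (a * a) (S.sq_mem a ha) (S.sq_nn a ha)

lemma abs_sq {a : R} (ha : a ∈ S.A) : S.absval a * S.absval a = a * a :=
  S.sqrt_sq (a * a) (S.sq_mem a ha) (S.sq_nn a ha)

lemma abs_comm_of_comm {a c : R} (ha : a ∈ S.A) (hc : c ∈ S.A)
    (hcomm : a * c = c * a) : S.absval a * c = c * S.absval a := by
  apply S.sqrt_bicomm (a * a) (S.sq_mem a ha) (S.sq_nn a ha) c hc
  rw [mul_assoc, hcomm, ← mul_assoc, hcomm, mul_assoc]

lemma abs_comm_self {a : R} (ha : a ∈ S.A) : S.absval a * a = a * S.absval a :=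
  abs_comm_of_comm S ha ha rfl

lemma abs_of_nn {a : R} (ha : a ∈ S.A) (h : S.le 0 a) : S.absval a = a :=
  sqrt_unique_comm S (abs_mem S ha) ha (abs_nn S ha) h (abs_comm_self S ha)
    (by rw [abs_sq S ha])

lemma abs_of_nonpos {a : R} (ha : a ∈ S.A) (h : S.le a 0) : S.absval a = -a := by
  have hnn : S.le 0 (-a) := by
    have := sub_nn S ha S.A.zero_mem h
    simpa using this
  apply sqrt_unique_comm S (abs_mem S ha) (S.A.neg_mem ha) (abs_nn S ha) hnn
  · rw [mul_neg, neg_mul, abs_comm_self S ha]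
  · rw [abs_sq S ha, neg_mul_neg]

end SynAux
namespace SynAux
set_option linter.unusedSectionVars false
set_option linter.unusedVariables false
variable {R : Type*} [Ring R] [Algebra ℝ R] (S : SynapticAlgebra R)

/-! ### Positive parts -/

lemma pospart_def (a : R) : S.pospart a = (2⁻¹:ℝ) • (S.absval a + a) := rfl

lemma pospart_mem {a : R} (ha : a ∈ S.A) : S.pospart a ∈ S.A :=
  S.A.smul_mem _ (S.A.add_mem (abs_mem S ha) ha)

lemma yx_zero {a : R} (ha : a ∈ S.A) :
    (S.absval a - a) * (S.absval a + a) = 0 := by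
  have h : (S.absval a - a) * (S.absval a + a) =
      S.absval a * S.absval a + S.absval a * a - a * S.absval a - a * a := by noncomm_ring
  rw [h, abs_sq S ha, abs_comm_self S ha]; abel

lemma xy_zero {a : R} (ha : a ∈ S.A) :
    (S.absval a + a) * (S.absval a - a) = 0 := by
  have h : (S.absval a + a) * (S.absval a - a) =
      S.absval a * S.absval a - S.absval a * a + a * S.absval a - a * a := by noncomm_ring
  rw [h, abs_sq S ha, abs_comm_self S ha]; abel

/-- Core decomposition: with `y = |a| - a` and `g = 1 - y°`, we have
`g a = a g = a⁺`, and `|a| + a ≥ 0`, `|a| - a ≥ 0`. -/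
lemma posdecomp {a : R} (ha : a ∈ S.A) :
    S.le 0 (S.absval a + a) ∧ S.le 0 (S.absval a - a) ∧
    (1 - S.carr (S.absval a - a)) * a = S.pospart a ∧
    a * (1 - S.carr (S.absval a - a)) = S.pospart a := by
  set y := S.absval a - a with hy
  set x := S.absval a + a with hx
  have hyA : y ∈ S.A := S.A.sub_mem (abs_mem S ha) ha
  have hxA : x ∈ S.A := S.A.add_mem (abs_mem S ha) ha
  set p := S.carr y with hpd
  have hpA : p ∈ S.A := S.carr_mem y hyA
  have hpidem : p * p = p := S.carr_idem y hyA
  have hgA : (1 - p) ∈ S.A := S.A.sub_mem S.one_mem hpA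
  have hgidem : (1 - p) * (1 - p) = 1 - p := one_sub_idem hpidem
  have hpx : p * x = 0 := (S.carr_spec y hyA x hxA).mp (yx_zero S ha)
  have hxp : x * p = 0 := proj_zero_comm' S hpA hpidem hxA hpx
  have hpy : p * y = y := carr_mul S hyA
  have hyp : y * p = y := mul_carr S hyA
  have hgx : (1 - p) * x = x := by rw [sub_mul, one_mul, hpx, sub_zero]
  have hxg : x * (1 - p) = x := by rw [mul_sub, mul_one, hxp, sub_zero]
  have hgy : (1 - p) * y = 0 := by rw [sub_mul, one_mul, hpy, sub_self]
  have hyg : y * (1 - p) = 0 := by rw [mul_sub, mul_one, hyp, sub_self]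
  have habs2 : x + y = S.absval a + S.absval a := by rw [hx, hy]; abel
  have hxnn : S.le 0 x := by
    have h1 : x = (1 - p) * S.absval a * (1 - p) + (1 - p) * S.absval a * (1 - p) := by
      have h2 : (1 - p) * (x + y) * (1 - p) =
          (1 - p) * x * (1 - p) + (1 - p) * y * (1 - p) := by noncomm_ring
      have h3 : (1 - p) * (S.absval a + S.absval a) * (1 - p) =
          (1 - p) * S.absval a * (1 - p) + (1 - p) * S.absval a * (1 - p) := by noncomm_ring
      rw [← habs2, h2] at h3
      rw [hgx, hxg, hgy, zero_mul, add_zero] at h3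
      exact h3
    rw [h1]
    have hq := S.quad_nn (1 - p) hgA (S.absval a) (abs_mem S ha)
      (proj_nn S hgA hgidem) (abs_nn S ha)
    exact add_nn S (S.quad_mem _ hgA _ (abs_mem S ha)) (S.quad_mem _ hgA _ (abs_mem S ha)) hq hq
  have hynn : S.le 0 y := by
    have h1 : y = p * S.absval a * p + p * S.absval a * p := by
      have h2 : p * (x + y) * p = p * x * p + p * y * p := by noncomm_ring
      have h3 : p * (S.absval a + S.absval a) * p =
          p * S.absval a * p + p * S.absval a * p := by noncomm_ring
      rw [← habs2, h2] at h3
      rw [hpx, zero_mul, zero_add] at h3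
      have h4 : p * y * p = y := by rw [mul_assoc, hyp, hpy]
      rw [h4] at h3
      exact h3
    rw [h1]
    have hq := S.quad_nn p hpA (S.absval a) (abs_mem S ha)
      (proj_nn S hpA hpidem) (abs_nn S ha)
    exact add_nn S (S.quad_mem _ hpA _ (abs_mem S ha)) (S.quad_mem _ hpA _ (abs_mem S ha)) hq hq
  have hxy2a : x - y = a + a := by rw [hx, hy]; abel
  have hga : (1 - p) * a = S.pospart a := by
    have h1 : (1 - p) * (a + a) = x := by
      rw [← hxy2a, mul_sub, hgx, hgy, sub_zero]
    have h2 : (1 - p) * (a + a) = (1 - p) * a + (1 - p) * a := by rw [mul_add]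
    rw [h2] at h1
    have h3 : (2:ℝ) • ((1 - p) * a) = x := by rw [two_smul]; exact h1
    have h4 : (1 - p) * a = (2⁻¹:ℝ) • x := by
      rw [← h3, smul_smul]; norm_num
    rw [h4, pospart_def, hx]
  have hag : a * (1 - p) = S.pospart a := by
    have h1 : (a + a) * (1 - p) = x := by
      rw [← hxy2a, sub_mul, hxg, hyg, sub_zero]
    have h2 : (a + a) * (1 - p) = a * (1 - p) + a * (1 - p) := by rw [add_mul]
    rw [h2] at h1
    have h3 : (2:ℝ) • (a * (1 - p)) = x := by rw [two_smul]; exact h1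
    have h4 : a * (1 - p) = (2⁻¹:ℝ) • x := by
      rw [← h3, smul_smul]; norm_num
    rw [h4, pospart_def, hx]
  exact ⟨hxnn, hynn, hga, hag⟩

lemma pospart_nn {a : R} (ha : a ∈ S.A) : S.le 0 (S.pospart a) := by
  rw [pospart_def]
  exact S.smul_nonneg _ (by norm_num) _ (S.A.add_mem (abs_mem S ha) ha) (posdecomp S ha).1

lemma pospart_sub_self {a : R} (ha : a ∈ S.A) :
    S.pospart a - a = (2⁻¹:ℝ) • (S.absval a - a) := by
  rw [pospart_def]; module

lemma negpart_nn {a : R} (ha : a ∈ S.A) : S.le 0 (S.pospart a - a) := by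
  rw [pospart_sub_self S ha]
  exact S.smul_nonneg _ (by norm_num) _ (S.A.sub_mem (abs_mem S ha) ha) (posdecomp S ha).2.1

lemma pospart_of_nn {a : R} (ha : a ∈ S.A) (h : S.le 0 a) : S.pospart a = a := by
  rw [pospart_def, abs_of_nn S ha h, show a + a = (2:ℝ) • a from (two_smul ℝ a).symm,
    smul_smul]
  norm_num

lemma pospart_of_nonpos {a : R} (ha : a ∈ S.A) (h : S.le a 0) : S.pospart a = 0 := by
  rw [pospart_def, abs_of_nonpos S ha h, neg_add_cancel, smul_zero]

lemma pospart_mul_negpart {a : R} (ha : a ∈ S.A) :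
    S.pospart a * (S.pospart a - a) = 0 := by
  rw [pospart_sub_self S ha, pospart_def, smul_mul_assoc, mul_smul_comm,
    xy_zero S ha, smul_zero, smul_zero]

end SynAux
namespace SynAux
set_option linter.unusedSectionVars false
set_option linter.unusedVariables false
variable {R : Type*} [Ring R] [Algebra ℝ R] (S : SynapticAlgebra R)

/-! ### Spectral computations -/

/-- For an effect `e ≥ 0` and `l ≥ 0`, `(e - l)⁺ ≤ e`. -/
lemma pospart_le_bound {e : R} (heA : e ∈ S.A) (henn : S.le 0 e) {l : ℝ}
    (hl : 0 ≤ l) : S.le (S.pospart (e - l • (1:R))) e := by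
  set a := e - l • (1:R) with hadef
  have haA : a ∈ S.A := S.A.sub_mem heA (S.A.smul_mem _ S.one_mem)
  obtain ⟨hxnn, hynn, hga, hag⟩ := posdecomp S haA
  set y := S.absval a - a with hy
  have hyA : y ∈ S.A := S.A.sub_mem (abs_mem S haA) haA
  set p := S.carr y with hpd
  have hpA : p ∈ S.A := S.carr_mem y hyA
  have hpidem : p * p = p := S.carr_idem y hyA
  have hgA : (1 - p) ∈ S.A := S.A.sub_mem S.one_mem hpA
  have hgag : (1 - p) * a * (1 - p) = S.pospart a := by
    rw [mul_assoc, hag, ← hga, ← mul_assoc, one_sub_idem hpidem]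
  have hea : e * a = a * e := by
    rw [hadef, mul_sub, sub_mul, mul_smul_comm, smul_mul_assoc, mul_one, one_mul]
  have heabs : S.absval a * e = e * S.absval a := abs_comm_of_comm S haA heA hea.symm
  have hey : e * y = y * e := by
    rw [hy, mul_sub, sub_mul, heabs, hea]
  have hep : e * p = p * e := carr_comm S hyA hynn heA hey
  have hale : S.le a e := by
    apply le_of_sub_nn S haA heA
    have : e - a = l • (1:R) := by rw [hadef]; abel
    rw [this]
    exact smul_one_nn S hl
  have hstep1 : S.le ((1 - p) * a * (1 - p)) ((1 - p) * e * (1 - p)) :=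
    conj_le S haA heA hgA hale
  have hstep2 : S.le ((1 - p) * e * (1 - p)) e := by
    apply le_of_sub_nn S (S.quad_mem _ hgA e heA) heA
    have hgeg : (1 - p) * e * (1 - p) = e - e * p := by
      have h3 : (1 - p) * e = e - p * e := by rw [sub_mul, one_mul]
      rw [h3, sub_mul, mul_sub, mul_one, ← hep, mul_sub, mul_one]
      have h4 : e * p * p = e * p := by rw [mul_assoc, hpidem]
      rw [h4]
      abel
    have hpep : e - ((1 - p) * e * (1 - p)) = p * e * p := by
      rw [hgeg]
      have h5 : p * e * p = e * p := by
        rw [← hep, mul_assoc, hpidem, hep]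
      rw [h5]
      abel
    rw [hpep]
    exact S.quad_nn p hpA e heA (proj_nn S hpA hpidem) henn
  rw [← hgag]
  exact S.le_trans _ (S.quad_mem _ hgA a haA) _ (S.quad_mem _ hgA e heA) _ heA hstep1 hstep2

/-- The positive part of `q - l` for a projection `q` and `0 ≤ l < 1`. -/
lemma pospart_proj_sub {q : R} (hqA : q ∈ S.A) (hq : q * q = q) {l : ℝ}
    (hl0 : 0 ≤ l) (hl1 : l < 1) :
    S.pospart (q - l • (1:R)) = (1 - l) • q := by
  set a := q - l • (1:R) with hadef
  have haA : a ∈ S.A := S.A.sub_mem hqA (S.A.smul_mem _ S.one_mem)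
  set v := (1 - l) • q + l • ((1:R) - q) with hvdef
  have hvA : v ∈ S.A := S.A.add_mem (S.A.smul_mem _ hqA)
    (S.A.smul_mem _ (S.A.sub_mem S.one_mem hqA))
  have hvnn : S.le 0 v :=
    add_nn S (S.A.smul_mem _ hqA) (S.A.smul_mem _ (S.A.sub_mem S.one_mem hqA))
      (S.smul_nonneg _ (by linarith) q hqA (proj_nn S hqA hq))
      (S.smul_nonneg _ hl0 _ (S.A.sub_mem S.one_mem hqA)
        (proj_nn S (S.A.sub_mem S.one_mem hqA) (one_sub_idem hq)))
  have hqa : q * a = a * q := by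
    rw [hadef, mul_sub, sub_mul, mul_smul_comm, smul_mul_assoc, mul_one, one_mul]
  have hqabs : S.absval a * q = q * S.absval a := abs_comm_of_comm S haA hqA hqa.symm
  have hvcomm : S.absval a * v = v * S.absval a := by
    rw [hvdef, mul_add, add_mul, mul_smul_comm, mul_smul_comm, smul_mul_assoc,
      smul_mul_assoc, hqabs, mul_sub, sub_mul, mul_one, one_mul, hqabs]
  have hsq : S.absval a * S.absval a = v * v := by
    rw [abs_sq S haA, hadef, hvdef]
    simp only [mul_add, add_mul, mul_sub, sub_mul, smul_mul_assoc, mul_smul_comm,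
      smul_smul, hq, mul_one, one_mul, smul_sub]
    module
  have habs : S.absval a = v :=
    sqrt_unique_comm S (abs_mem S haA) hvA (abs_nn S haA) hvnn hvcomm hsq
  rw [pospart_def, habs, hvdef, hadef]
  module

lemma carr_pospart_proj_sub {q : R} (hqA : q ∈ S.A) (hq : q * q = q) {l : ℝ}
    (hl0 : 0 ≤ l) (hl1 : l < 1) :
    S.carr (S.pospart (q - l • (1:R))) = q := by
  rw [pospart_proj_sub S hqA hq hl0 hl1, carr_smul S hqA (by linarith), carr_proj S hqA hq]

lemma carr_pospart_inv {f : R} (hfA : f ∈ S.A) (hfnn : S.le 0 f) {l : ℝ} (hl : l < 0) :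
    S.carr (S.pospart (f - l • (1:R))) = 1 := by
  have hmem : f - l • (1:R) ∈ S.A := S.A.sub_mem hfA (S.A.smul_mem _ S.one_mem)
  have hge : S.le ((-l) • (1:R)) (f - l • (1:R)) := by
    have h1 := S.add_le_add_right 0 S.A.zero_mem f hfA ((-l) • (1:R))
      (S.A.smul_mem _ S.one_mem) hfnn
    rw [zero_add] at h1
    have h2 : f + (-l) • (1:R) = f - l • (1:R) := by
      rw [neg_smul, ← sub_eq_add_neg]
    rwa [h2] at h1
  have hnn : S.le 0 (f - l • (1:R)) :=
    S.le_trans 0 S.A.zero_mem _ (S.A.smul_mem _ S.one_mem) _ hmem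
      (smul_one_nn S (by linarith)) hge
  rw [pospart_of_nn S hmem hnn]
  exact carr_eq_one S hmem (by linarith : (0:ℝ) < -l) hge

lemma pospart_sub_zero {e : R} (heA : e ∈ S.A) {l : ℝ}
    (h : S.le e (l • (1:R))) : S.pospart (e - l • (1:R)) = 0 := by
  apply pospart_of_nonpos S (S.A.sub_mem heA (S.A.smul_mem _ S.one_mem))
  have h1 : S.le 0 (l • (1:R) - e) := sub_nn S heA (S.A.smul_mem _ S.one_mem) h
  have h2 := neg_nonpos S (S.A.sub_mem (S.A.smul_mem _ S.one_mem) heA) h1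
  rwa [neg_sub] at h2

end SynAux
namespace SynAux
set_option linter.unusedSectionVars false
set_option linter.unusedVariables false
variable {R : Type*} [Ring R] [Algebra ℝ R] (S : SynapticAlgebra R)

/-- If `p` is a projection with `fp = pf = p`, then `(f - l)⁺ p = p (f - l)⁺ = (1-l) p`. -/
lemma pospart_mul_proj {f p : R} (hfA : f ∈ S.A) (hpA : p ∈ S.A) (hp : p * p = p)
    (hfp : f * p = p) (hpf : p * f = p) {l : ℝ} (hl0 : 0 ≤ l) (hl1 : l < 1) :
    S.pospart (f - l • (1:R)) * p = (1 - l) • p ∧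
    p * S.pospart (f - l • (1:R)) = (1 - l) • p := by
  set a := f - l • (1:R) with hadef
  have haA : a ∈ S.A := S.A.sub_mem hfA (S.A.smul_mem _ S.one_mem)
  have hap : a * p = (1 - l) • p := by
    rw [hadef, sub_mul, smul_mul_assoc, one_mul, hfp, sub_smul, one_smul]
  have hpa : p * a = (1 - l) • p := by
    rw [hadef, mul_sub, mul_smul_comm, mul_one, hpf, sub_smul, one_smul]
  have hcomm : a * p = p * a := by rw [hap, hpa]
  have habsp : S.absval a * p = p * S.absval a := abs_comm_of_comm S haA hpA hcomm
  set u := S.absval a * p with hu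
  have huA : u ∈ S.A := mul_mem_comm S (abs_mem S haA) hpA habsp
  have hunn : S.le 0 u := by
    have h1 : p * S.absval a * p = u := by
      rw [← habsp, hu, mul_assoc, hp]
    rw [← h1]
    exact S.quad_nn p hpA _ (abs_mem S haA) (proj_nn S hpA hp) (abs_nn S haA)
  have husq : u * u = ((1 - l) * (1 - l)) • p := by
    have h1 : u * u = S.absval a * (p * S.absval a) * p := by
      rw [hu]; noncomm_ring
    rw [← habsp] at h1
    have h2 : S.absval a * (S.absval a * p) * p = (S.absval a * S.absval a) * (p * p) := by
      noncomm_ring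
    rw [h2, hp, abs_sq S haA] at h1
    have h3 : a * a * p = a * (a * p) := by rw [mul_assoc]
    rw [h1, h3, hap, mul_smul_comm, hap, smul_smul]
  set v := (1 - l) • p with hv
  have hvA : v ∈ S.A := S.A.smul_mem _ hpA
  have hvnn : S.le 0 v := S.smul_nonneg _ (by linarith) p hpA (proj_nn S hpA hp)
  have hvsq : v * v = ((1 - l) * (1 - l)) • p := by
    rw [hv, smul_mul_assoc, mul_smul_comm, smul_smul, hp]
  have hcomm_uv : u * v = v * u := by
    rw [hu, hv, mul_smul_comm, smul_mul_assoc, mul_assoc, hp, ← mul_assoc, ← habsp,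
      mul_assoc, hp]
  have habs_p : u = v :=
    sqrt_unique_comm S huA hvA hunn hvnn hcomm_uv (by rw [husq, hvsq])
  have hhalf : (2⁻¹:ℝ) • (v + v) = v := by
    rw [← two_smul ℝ v, smul_smul]
    norm_num
  constructor
  · rw [pospart_def, smul_mul_assoc, add_mul, ← hu, habs_p, hap, hhalf]
  · have hpabs : p * S.absval a = v := by rw [← habsp]; exact habs_p
    rw [pospart_def, mul_smul_comm, mul_add, hpabs, hpa, hhalf]

/-- `d a d = a⁺` where `d` is the carrier of `a⁺`. -/
lemma carr_pospart_conj {a : R} (ha : a ∈ S.A) :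
    S.carr (S.pospart a) * a * S.carr (S.pospart a) = S.pospart a := by
  set d := S.carr (S.pospart a) with hd
  have hppA : S.pospart a ∈ S.A := pospart_mem S ha
  have hnA : S.pospart a - a ∈ S.A := S.A.sub_mem hppA ha
  have hdpp : d * S.pospart a = S.pospart a := carr_mul S hppA
  have hppd : S.pospart a * d = S.pospart a := mul_carr S hppA
  have hdn : d * (S.pospart a - a) = 0 :=
    (S.carr_spec (S.pospart a) hppA _ hnA).mp (pospart_mul_negpart S ha)
  have h2 : d * a = S.pospart a := by
    have h1 : d * a = d * S.pospart a - d * (S.pospart a - a) := by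
      rw [mul_sub]; abel
    rw [h1, hdn, hdpp, sub_zero]
  rw [h2, hppd]

lemma one_sub_le_one_sub {c₁ c₂ : R} (h1 : c₁ ∈ S.A) (h2 : c₂ ∈ S.A)
    (h : S.le c₂ c₁) : S.le (1 - c₁) (1 - c₂) := by
  apply le_of_sub_nn S (S.A.sub_mem S.one_mem h1) (S.A.sub_mem S.one_mem h2)
  have : (1 - c₂) - (1 - c₁) = c₁ - c₂ := by abel
  rw [this]
  exact sub_nn S h2 h1 h

lemma le_of_one_sub_le {c₁ c₂ : R} (h1 : c₁ ∈ S.A) (h2 : c₂ ∈ S.A)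
    (h : S.le (1 - c₁) (1 - c₂)) : S.le c₂ c₁ := by
  apply le_of_sub_nn S h2 h1
  have h3 := sub_nn S (S.A.sub_mem S.one_mem h1) (S.A.sub_mem S.one_mem h2) h
  have : (1 - c₂) - (1 - c₁) = c₁ - c₂ := by abel
  rwa [this] at h3

end SynAux
namespace SynAux
set_option linter.unusedSectionVars false
set_option linter.unusedVariables false
variable {R : Type*} [Ring R] [Algebra ℝ R] (S : SynapticAlgebra R)

lemma sub_smul_one_mem {a : R} (ha : a ∈ S.A) (l : ℝ) : a - l • (1:R) ∈ S.A :=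
  S.A.sub_mem ha (S.A.smul_mem _ S.one_mem)

lemma carr_pospart_mem {a : R} (ha : a ∈ S.A) (l : ℝ) :
    S.carr (S.pospart (a - l • (1:R))) ∈ S.A :=
  S.carr_mem _ (pospart_mem S (sub_smul_one_mem S ha l))

lemma specLE_iff_carr {e f : R} (heA : e ∈ S.A) (hfA : f ∈ S.A) :
    S.specLE e f ↔ ∀ l : ℝ,
      S.le (S.carr (S.pospart (e - l • (1:R)))) (S.carr (S.pospart (f - l • (1:R)))) := by
  unfold SynapticAlgebra.specLE SynapticAlgebra.specProj
  simp only [Algebra.algebraMap_eq_smul_one]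
  constructor
  · intro h l
    exact le_of_one_sub_le S (carr_pospart_mem S hfA l) (carr_pospart_mem S heA l) (h l)
  · intro h l
    exact one_sub_le_one_sub S (carr_pospart_mem S hfA l) (carr_pospart_mem S heA l) (h l)

/-- Case `f` a projection, forward direction. -/
lemma case_proj_right_fwd {e f : R} (heA : e ∈ S.A) (henn : S.le 0 e) (hele : S.le e 1)
    (hfA : f ∈ S.A) (hq : f * f = f) (hef : S.le e f) : S.specLE e f := by
  rw [specLE_iff_carr S heA hfA]
  intro l
  rcases lt_or_ge l 0 with hl0 | hl0
  · rw [carr_pospart_inv S hfA (proj_nn S hfA hq) hl0]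
    exact carr_le_one S (pospart_mem S (sub_smul_one_mem S heA l))
  rcases lt_or_ge l 1 with hl1 | hl1
  · rw [carr_pospart_proj_sub S hfA hq hl0 hl1]
    have hppA : S.pospart (e - l • (1:R)) ∈ S.A := pospart_mem S (sub_smul_one_mem S heA l)
    have h1 : S.le (S.carr (S.pospart (e - l • (1:R)))) (S.carr e) :=
      carr_mono S hppA heA (pospart_nn S (sub_smul_one_mem S heA l))
        (pospart_le_bound S heA henn hl0)
    have h2 : S.le (S.carr e) f := by
      obtain ⟨hqe, heq⟩ := eff_le_proj_mul S heA henn hfA hq hef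
      have h3 : e * (1 - f) = 0 := by rw [mul_sub, mul_one, heq, sub_self]
      have h4 : S.carr e * (1 - f) = 0 :=
        (S.carr_spec e heA (1 - f) (S.A.sub_mem S.one_mem hfA)).mp h3
      have h5 : S.carr e * f = S.carr e := by
        rw [mul_sub, mul_one, sub_eq_zero] at h4
        exact h4.symm
      exact proj_le_of_mul S (S.carr_mem e heA) (S.carr_idem e heA) hfA hq h5
    exact S.le_trans _ (S.carr_mem _ hppA) _ (S.carr_mem e heA) _ hfA h1 h2
  · have hle : S.le e (l • (1:R)) := le_one_smul_of_le S hl1 heA hele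
    rw [pospart_sub_zero S heA hle, carr_zero S]
    exact carr_nn S (pospart_mem S (sub_smul_one_mem S hfA l))

/-- Case `f` a projection, backward direction. -/
lemma case_proj_right_bwd {e f : R} (heA : e ∈ S.A) (henn : S.le 0 e) (hele : S.le e 1)
    (hfA : f ∈ S.A) (hfnn : S.le 0 f) (hq : f * f = f) (hs : S.specLE e f) : S.le e f := by
  have h0 := (specLE_iff_carr S heA hfA).mp hs 0
  rw [zero_smul, sub_zero, sub_zero, pospart_of_nn S heA henn, pospart_of_nn S hfA hfnn,
    carr_proj S hfA hq] at h0
  obtain ⟨hmul1, hmul2⟩ := proj_mul_of_le S (S.carr_mem e heA) (S.carr_idem e heA) hfA hq h0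
  have hfe : f * e = e := by
    have h1 : f * (S.carr e * e) = (f * S.carr e) * e := by rw [mul_assoc]
    rw [carr_mul S heA, hmul2, carr_mul S heA] at h1
    exact h1
  have hef2 : e * f = e := by
    have h1 : (e * S.carr e) * f = e * (S.carr e * f) := by rw [mul_assoc]
    rw [mul_carr S heA, hmul1, mul_carr S heA] at h1
    exact h1
  exact eff_le_proj_of_mul S heA hele hfA hq hfe hef2

/-- Case `e` a projection, forward direction. -/
lemma case_proj_left_fwd {e f : R} (heA : e ∈ S.A) (hp : e * e = e)
    (hfA : f ∈ S.A) (hfnn : S.le 0 f) (hfle : S.le f 1) (hef : S.le e f) : S.specLE e f := by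
  rw [specLE_iff_carr S heA hfA]
  intro l
  rcases lt_or_ge l 0 with hl0 | hl0
  · rw [carr_pospart_inv S hfA hfnn hl0]
    exact carr_le_one S (pospart_mem S (sub_smul_one_mem S heA l))
  rcases lt_or_ge l 1 with hl1 | hl1
  · rw [carr_pospart_proj_sub S heA hp hl0 hl1]
    obtain ⟨hef2, hfe⟩ := proj_le_eff_mul S heA hp hfA hfle hef
    obtain ⟨hmul1, hmul2⟩ := pospart_mul_proj S hfA heA hp hfe hef2 hl0 hl1
    set d := S.carr (S.pospart (f - l • (1:R))) with hd
    have haA : f - l • (1:R) ∈ S.A := sub_smul_one_mem S hfA l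
    have hppA : S.pospart (f - l • (1:R)) ∈ S.A := pospart_mem S haA
    have hdA : d ∈ S.A := S.carr_mem _ hppA
    have hdidem : d * d = d := S.carr_idem _ hppA
    have hppd : S.pospart (f - l • (1:R)) * (1 - d) = 0 := by
      rw [mul_sub, mul_one, mul_carr S hppA, sub_self]
    have h3 : (1 - l) • (e * (1 - d)) = 0 := by
      have h4 : ((1 - l) • e) * (1 - d) = (1 - l) • (e * (1 - d)) := by
        rw [smul_mul_assoc]
      rw [← h4, ← hmul2, mul_assoc, hppd, mul_zero]
    have h5 : e * (1 - d) = 0 := by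
      have h6 := congrArg (fun z => (1 - l)⁻¹ • z) h3
      simpa [smul_smul, inv_mul_cancel₀ (by linarith : (1:ℝ) - l ≠ 0)] using h6
    have h7 : e * d = e := by
      rw [mul_sub, mul_one, sub_eq_zero] at h5
      exact h5.symm
    exact proj_le_of_mul S heA hp hdA hdidem h7
  · have hle : S.le e (l • (1:R)) := le_one_smul_of_le S hl1 heA (proj_le_one S heA hp)
    rw [pospart_sub_zero S heA hle, carr_zero S]
    exact carr_nn S (pospart_mem S (sub_smul_one_mem S hfA l))

/-- Case `e` a projection, backward direction. -/
lemma case_proj_left_bwd {e f : R} (heA : e ∈ S.A) (hp : e * e = e)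
    (hfA : f ∈ S.A) (hfnn : S.le 0 f) (hfle : S.le f 1) (hs : S.specLE e f) : S.le e f := by
  have hefeA : e * f * e ∈ S.A := S.quad_mem e heA f hfA
  have key : ∀ l : ℝ, 0 ≤ l → l < 1 → S.le (l • e) (e * f * e) := by
    intro l hl0 hl1
    have hsl := (specLE_iff_carr S heA hfA).mp hs l
    rw [carr_pospart_proj_sub S heA hp hl0 hl1] at hsl
    set a := f - l • (1:R) with hadef
    have haA : a ∈ S.A := sub_smul_one_mem S hfA l
    set d := S.carr (S.pospart a) with hd
    have hppA : S.pospart a ∈ S.A := pospart_mem S haA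
    have hdA : d ∈ S.A := S.carr_mem _ hppA
    have hdidem : d * d = d := S.carr_idem _ hppA
    obtain ⟨hed, hde⟩ := proj_mul_of_le S heA hp hdA hdidem hsl
    have hdad : d * a * d = S.pospart a := carr_pospart_conj S haA
    have hdfd : d * f * d = S.pospart a + l • d := by
      have h1 : d * a * d = d * f * d - l • (d * d) := by
        rw [hadef, mul_sub, sub_mul, mul_smul_comm, smul_mul_assoc, mul_one]
      rw [hdidem] at h1
      rw [← hdad, h1]
      abel
    have hstep : S.le (l • d) (d * f * d) := by
      apply le_of_sub_nn S (S.A.smul_mem _ hdA) (S.quad_mem d hdA f hfA)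
      rw [hdfd]
      have h2 : S.pospart a + l • d - l • d = S.pospart a := by abel
      rw [h2]
      exact pospart_nn S haA
    have hconj : S.le (e * (l • d) * e) (e * (d * f * d) * e) :=
      conj_le S (S.A.smul_mem _ hdA) (S.quad_mem d hdA f hfA) heA hstep
    have hL : e * (l • d) * e = l • e := by
      rw [mul_smul_comm, smul_mul_assoc, mul_assoc, ← mul_assoc e d e, hed, hp]
    have hR : e * (d * f * d) * e = e * f * e := by
      have h3 : e * (d * f * d) * e = (e * d) * f * (d * e) := by noncomm_ring
      rw [h3, hed, hde]
    rwa [hL, hR] at hconj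
  have hle1 : S.le (e * f * e) e := by
    have h1 : S.le (e * f * e) (e * 1 * e) := conj_le S hfA S.one_mem heA hfle
    have h2 : e * 1 * e = e := by rw [mul_one, hp]
    rwa [h2] at h1
  have hge : S.le e (e * f * e) := by
    apply le_of_sub_nn S heA hefeA
    apply arch' S (S.A.sub_mem hefeA heA)
    intro δ hδ
    set m := min δ 1 with hm
    have hm0 : 0 < m := lt_min hδ one_pos
    have hm1 : m ≤ 1 := min_le_right _ _
    set l := 1 - m with hl
    have hl0 : 0 ≤ l := by simp [hl]; linarith
    have hl1 : l < 1 := by simp [hl]; linarith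
    have hkey := key l hl0 hl1
    have h1 : S.le 0 (e * f * e - l • e) := sub_nn S (S.A.smul_mem _ heA) hefeA hkey
    have heq : e * f * e - e + m • e = e * f * e - l • e := by
      rw [hl, sub_smul, one_smul]
      abel
    have h2 : S.le 0 (e * f * e - e + m • e) := by rw [heq]; exact h1
    have h3 : S.le (m • e) (δ • (1:R)) := by
      have h4 : S.le (m • e) (m • (1:R)) :=
        smul_le S hm0.le heA S.one_mem (proj_le_one S heA hp)
      have h5 : S.le (m • (1:R)) (δ • (1:R)) := smul_one_le_smul_one S (min_le_left _ _)
      exact S.le_trans _ (S.A.smul_mem _ heA) _ (S.A.smul_mem _ S.one_mem) _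
        (S.A.smul_mem _ S.one_mem) h4 h5
    have h6 : S.le (e * f * e - e + m • e) (e * f * e - e + δ • (1:R)) :=
      add_le_add S (S.A.sub_mem hefeA heA) (S.A.sub_mem hefeA heA)
        (S.A.smul_mem _ heA) (S.A.smul_mem _ S.one_mem)
        (S.le_refl _ (S.A.sub_mem hefeA heA)) h3
    exact S.le_trans _ S.A.zero_mem _
      (S.A.add_mem (S.A.sub_mem hefeA heA) (S.A.smul_mem _ heA)) _
      (S.A.add_mem (S.A.sub_mem hefeA heA) (S.A.smul_mem _ S.one_mem)) h2 h6
  have hefe : e * f * e = e := S.le_antisymm _ hefeA _ heA hle1 hge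
  have hzero : e * (1 - f) * e = 0 := by
    have h1 : e * (1 - f) * e = e * e - e * f * e := by noncomm_ring
    rw [h1, hp, hefe, sub_self]
  have h5 := S.quad_zero e heA (1 - f) (S.A.sub_mem S.one_mem hfA)
    (sub_nn S hfA S.one_mem hfle) hzero
  have hef2 : e * f = e := by
    have := h5.1
    rw [mul_sub, mul_one, sub_eq_zero] at this
    exact this.symm
  have hfe : f * e = e := by
    have := h5.2
    rw [sub_mul, one_mul, sub_eq_zero] at this
    exact this.symm
  exact proj_le_eff_of_mul S heA hp hfA hfnn hfe hef2

end SynAux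

/-- For effects `e, f`, one of which is a projection, `e ≤ f ↔ e ≤ₛ f`. -/
theorem effect_le_iff_specLE_of_proj {R : Type*} [Ring R] [Algebra ℝ R]
    (S : SynapticAlgebra R) (e f : R) (he : e ∈ S.effects) (hf : f ∈ S.effects)
    (hproj : e * e = e ∨ f * f = f) :
    S.le e f ↔ S.specLE e f := by
  obtain ⟨heA, henn, hele⟩ := he
  obtain ⟨hfA, hfnn, hfle⟩ := hf
  rcases hproj with hp | hq
  · exact ⟨fun h => SynAux.case_proj_left_fwd S heA hp hfA hfnn hfle h,
      fun h => SynAux.case_proj_left_bwd S heA hp hfA hfnn hfle h⟩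
  · exact ⟨fun h => SynAux.case_proj_right_fwd S heA henn hele hfA hq h,
      fun h => SynAux.case_proj_right_bwd S heA henn hele hfA hfnn hq h⟩
end

section
/- Let A be a Banach synaptic algebra (a norm-complete synaptic algebra) and let (p_λ)_{λ∈ℝ} be a bounded resolution of identity in A. Then the Riemann–Stieltjes sums for ∫_{−K}^{K} λ dp_λ converge in norm to an element a ∈ A such that ‖a‖ ≤ K and (p_λ)_{λ∈ℝ} is the spectral resolution of a (i.e., p_λ = p_{a,λ} for all λ ∈ ℝ). -/
open Filter Topology

/-! The lower Riemann–Stieltjes sums `L k` of `∫ λ dp_λ` over the dyadic grids increase with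
`k`, commute with each other and with every `p_λ`, and comparing two tagged sums through their
common refinement shows that they differ in norm by at most the sum of their meshes. So `L k`
converges to some `a`, which commutes with every `p_λ` by SA8. Passing to the limit in
`L k · p_t ≤ t p_t` and `(t - mesh) (1 - p_t) ≤ L k · (1 - p_t)` gives `a p_t ≤ t p_t` and
`t (1 - p_t) ≤ a (1 - p_t)`. These bound `‖a‖` by `K` and show `(a - t)⁺ = (a - t)(1 - p_t)`.
The part of `1 - p_t` outside the carrier of `(a - t)⁺` is a `t`-eigenprojection of `a`, so it
lies below every `p_s` with `s > t`, hence below `p_t` by right continuity, hence vanishes;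
therefore `p_{a,t} = p_t`. -/

lemma inter_increment_eq_clamp_increment {G : Type*} [AddCommGroup G] (f : ℝ → G) {a b s t : ℝ}
    (hab : a ≤ b) (hst : s ≤ t) :
    f (max (min b t) (max a s)) - f (max a s) = f (max a (min b t)) - f (max a (min b s)) := by
  rcases le_or_gt t a with hta | hat
  · have hbt : min b t ≤ a := min_le_of_right_le hta
    rw [max_eq_right (hbt.trans (le_max_left a s)), max_eq_left hbt,
      max_eq_left (min_le_of_right_le (hst.trans hta)), sub_self, sub_self]
  rcases le_or_gt b s with hbs | hsb
  · rw [min_eq_left (hbs.trans hst), max_eq_right (hab.trans hbs), max_eq_right hbs,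
      min_eq_left hbs, sub_self, sub_self]
  · rw [max_eq_left (by simp [hab, hat.le, hsb.le, hst]), max_eq_right (le_min hab hat.le),
      min_eq_right hsb.le]

lemma Finset.sum_range_two_mul {M : Type*} [AddCommMonoid M] (f : ℕ → M) (m : ℕ) :
    ∑ j ∈ Finset.range (2 * m), f j = ∑ i ∈ Finset.range m, (f (2 * i) + f (2 * i + 1)) := by
  induction m with
  | zero => simp
  | succ m ih =>
    rw [Nat.mul_succ, Finset.sum_range_succ, Finset.sum_range_succ, Finset.sum_range_succ, ih,
      add_assoc]

namespace SynapticAlgebra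

variable {R : Type*} [Ring R] [Algebra ℝ R] {S : SynapticAlgebra R}

section Order

lemma smul_one_mem (r : ℝ) : r • (1 : R) ∈ S.A := S.A.smul_mem r S.one_mem

lemma le_iff_nonneg_sub {x y : R} (hx : x ∈ S.A) (hy : y ∈ S.A) :
    S.le x y ↔ S.le 0 (y - x) := by
  constructor
  · intro h
    simpa [sub_eq_add_neg] using S.add_le_add_right x hx y hy (-x) (S.A.neg_mem hx) h
  · intro h
    simpa using S.add_le_add_right 0 S.A.zero_mem (y - x) (S.A.sub_mem hy hx) x hx h

lemma le_iff_le_of_sub_eq_sub {x y z w : R} (hx : x ∈ S.A) (hy : y ∈ S.A) (hz : z ∈ S.A)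
    (hw : w ∈ S.A) (h : y - x = w - z) : S.le x y ↔ S.le z w := by
  rw [le_iff_nonneg_sub hx hy, le_iff_nonneg_sub hz hw, h]

lemma add_le_add {x y z w : R} (hx : x ∈ S.A) (hy : y ∈ S.A) (hz : z ∈ S.A) (hw : w ∈ S.A)
    (hxy : S.le x y) (hzw : S.le z w) : S.le (x + z) (y + w) := by
  have hyz : S.le (y + z) (y + w) := by
    rwa [le_iff_le_of_sub_eq_sub (S.A.add_mem hy hz) (S.A.add_mem hy hw) hz hw (by abel)]
  exact S.le_trans _ (S.A.add_mem hx hz) _ (S.A.add_mem hy hz) _ (S.A.add_mem hy hw)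
    (S.add_le_add_right x hx y hy z hz hxy) hyz

lemma sum_le_sum {ι : Type*} {s : Finset ι} {f g : ι → R} (hf : ∀ i ∈ s, f i ∈ S.A)
    (hg : ∀ i ∈ s, g i ∈ S.A) (h : ∀ i ∈ s, S.le (f i) (g i)) :
    S.le (∑ i ∈ s, f i) (∑ i ∈ s, g i) := by
  classical
  induction s using Finset.induction_on with
  | empty => simpa using S.le_refl 0 S.A.zero_mem
  | insert i s hi ih =>
    simp only [Finset.mem_insert, forall_eq_or_imp] at hf hg h
    rw [Finset.sum_insert hi, Finset.sum_insert hi]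
    exact add_le_add hf.1 hg.1 (S.A.sum_mem hf.2) (S.A.sum_mem hg.2) h.1 (ih hf.2 hg.2 h.2)

lemma smul_le_smul_of_nonneg_left {r : ℝ} (hr : 0 ≤ r) {x y : R} (hx : x ∈ S.A) (hy : y ∈ S.A)
    (h : S.le x y) : S.le (r • x) (r • y) := by
  rw [le_iff_nonneg_sub (S.A.smul_mem r hx) (S.A.smul_mem r hy), ← smul_sub]
  exact S.smul_nonneg r hr _ (S.A.sub_mem hy hx) ((le_iff_nonneg_sub hx hy).1 h)

lemma zero_le_one : S.le 0 (1 : R) := by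
  simpa using S.sq_nn 1 S.one_mem

lemma smul_one_le_smul_one {r s : ℝ} (h : r ≤ s) : S.le (r • (1 : R)) (s • (1 : R)) := by
  rw [le_iff_nonneg_sub (smul_one_mem r) (smul_one_mem s), ← sub_smul]
  exact S.smul_nonneg _ (by linarith) 1 S.one_mem zero_le_one

lemma le_of_smul_one_le_smul_one {r s : ℝ} (h : S.le (r • (1 : R)) (s • (1 : R))) : r ≤ s := by
  by_contra! hsr
  have hneg : S.le 0 ((-1 : ℝ) • (1 : R)) := by
    have := S.smul_nonneg (r - s)⁻¹ (by positivity) _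
      (S.A.sub_mem (smul_one_mem s) (smul_one_mem r))
      ((le_iff_nonneg_sub (smul_one_mem r) (smul_one_mem s)).1 h)
    rwa [← sub_smul, smul_smul, show (r - s)⁻¹ * (s - r) = -1 by field_simp; ring] at this
  have hle : S.le (1 : R) 0 := by
    rwa [le_iff_nonneg_sub S.one_mem S.A.zero_mem, zero_sub, ← neg_one_smul ℝ]
  exact S.zero_ne_one (S.le_antisymm 0 S.A.zero_mem 1 S.one_mem zero_le_one hle)

lemma le_of_forall_pos_le_add_smul_one {x y : R} (hx : x ∈ S.A) (hy : y ∈ S.A)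
    (h : ∀ ε : ℝ, 0 < ε → S.le x (y + ε • (1 : R))) : S.le x y := by
  have hxy := S.A.sub_mem hx hy
  suffices S.le (x - y) 0 from (le_iff_le_of_sub_eq_sub hx hy hxy S.A.zero_mem (by abel)).2 this
  refine S.arch _ hxy 1 S.one_mem fun n => ?_
  rcases Nat.eq_zero_or_pos n with rfl | hn
  · simpa using zero_le_one (S := S)
  · have hn' : (0 : ℝ) < n := by exact_mod_cast hn
    have hε : S.le (x - y) ((n : ℝ)⁻¹ • (1 : R)) := by
      rw [le_iff_le_of_sub_eq_sub hxy (smul_one_mem _) hx (S.A.add_mem hy (smul_one_mem _))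
        (by abel)]
      exact h _ (by positivity)
    simpa [smul_smul, hn'.ne'] using smul_le_smul_of_nonneg_left hn'.le hxy (smul_one_mem _) hε

end Order

section OrderUnitNorm

lemma ouNorm_eq (x : R) : ouNorm S.le x =
    sInf {l : ℝ | 0 < l ∧ S.le ((-l) • (1 : R)) x ∧ S.le x (l • (1 : R))} := by
  simp only [ouNorm, Algebra.algebraMap_eq_smul_one]

lemma le_smul_one_of_ouNorm_lt {x : R} (hx : x ∈ S.A) {c : ℝ} (h : ouNorm S.le x < c) :
    S.le ((-c) • (1 : R)) x ∧ S.le x (c • (1 : R)) := by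
  obtain ⟨n, hn⟩ := S.one_order_unit x hx
  obtain ⟨m, hm⟩ := S.one_order_unit (-x) (S.A.neg_mem hx)
  have hne : ∃ l : ℝ, 0 < l ∧ S.le ((-l) • (1 : R)) x ∧ S.le x (l • (1 : R)) := by
    refine ⟨n + m + 1, by positivity, ?_, ?_⟩
    · refine S.le_trans _ (smul_one_mem _) _ (smul_one_mem (-(m : ℝ))) _ hx
        (smul_one_le_smul_one (by linarith [n.cast_nonneg (α := ℝ)])) ?_
      rwa [le_iff_le_of_sub_eq_sub (smul_one_mem _) hx (S.A.neg_mem hx) (smul_one_mem _)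
        (by module)]
    · exact S.le_trans _ hx _ (smul_one_mem _) _ (smul_one_mem _) hn
        (smul_one_le_smul_one (by linarith [m.cast_nonneg (α := ℝ)]))
  rw [ouNorm_eq] at h
  obtain ⟨l, ⟨-, hlx, hxl⟩, hlc⟩ := exists_lt_of_csInf_lt hne h
  exact ⟨S.le_trans _ (smul_one_mem _) _ (smul_one_mem _) _ hx
      (smul_one_le_smul_one (by linarith)) hlx,
    S.le_trans _ hx _ (smul_one_mem _) _ (smul_one_mem _) hxl (smul_one_le_smul_one hlc.le)⟩

lemma ouNorm_le_of_le_smul_one {x : R} (hx : x ∈ S.A) {c : ℝ}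
    (hlow : S.le ((-c) • (1 : R)) x) (hup : S.le x (c • (1 : R))) : ouNorm S.le x ≤ c := by
  have hc : -c ≤ c := le_of_smul_one_le_smul_one
    (S.le_trans _ (smul_one_mem _) _ hx _ (smul_one_mem _) hlow hup)
  rw [ouNorm_eq]
  refine _root_.le_of_forall_pos_le_add fun ε hε => csInf_le ⟨0, fun l hl => hl.1.le⟩ ?_
  refine ⟨by linarith, S.le_trans _ (smul_one_mem _) _ (smul_one_mem _) _ hx
    (smul_one_le_smul_one (by linarith)) hlow, S.le_trans _ hx _ (smul_one_mem _) _
    (smul_one_mem _) hup (smul_one_le_smul_one (by linarith))⟩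

lemma ouNorm_nonneg (x : R) : 0 ≤ ouNorm S.le x := by
  rw [ouNorm_eq]
  exact Real.sInf_nonneg fun l hl => hl.1.le

lemma ouNorm_add_le {x y : R} (hx : x ∈ S.A) (hy : y ∈ S.A) :
    ouNorm S.le (x + y) ≤ ouNorm S.le x + ouNorm S.le y := by
  refine _root_.le_of_forall_pos_le_add fun ε hε => ?_
  obtain ⟨hx₁, hx₂⟩ := le_smul_one_of_ouNorm_lt hx (lt_add_of_pos_right _ (half_pos hε))
  obtain ⟨hy₁, hy₂⟩ := le_smul_one_of_ouNorm_lt hy (lt_add_of_pos_right _ (half_pos hε))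
  have key := ouNorm_le_of_le_smul_one (S.A.add_mem hx hy)
    (c := ouNorm S.le x + ε / 2 + (ouNorm S.le y + ε / 2))
    (by convert add_le_add (smul_one_mem _) hx (smul_one_mem _) hy hx₁ hy₁ using 1; module)
    (by simpa only [← add_smul] using add_le_add hx (smul_one_mem _) hy (smul_one_mem _) hx₂ hy₂)
  linarith

lemma ouNorm_smul_one_le (r : ℝ) : ouNorm S.le (r • (1 : R)) ≤ |r| :=
  ouNorm_le_of_le_smul_one (smul_one_mem r) (smul_one_le_smul_one (neg_abs_le r))
    (smul_one_le_smul_one (le_abs_self r))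

end OrderUnitNorm

section Projection

lemma mul_mem_of_commute {x y : R} (hx : x ∈ S.A) (hy : y ∈ S.A) (h : Commute x y) :
    x * y ∈ S.A := by
  have hsq : (x + y) * (x + y) - x * x - y * y = (2 : ℝ) • (x * y) := by
    rw [two_smul, add_mul, mul_add, mul_add, h.eq]; abel
  have hxy : x * y = (2⁻¹ : ℝ) • ((x + y) * (x + y) - x * x - y * y) := by
    rw [hsq, smul_smul]; norm_num
  rw [hxy]
  exact S.A.smul_mem _ (S.A.sub_mem (S.A.sub_mem (S.sq_mem _ (S.A.add_mem hx hy))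
    (S.sq_mem _ hx)) (S.sq_mem _ hy))

lemma eq_zero_of_nonneg_of_add_eq_zero {x y : R} (hx : x ∈ S.A) (hx0 : S.le 0 x)
    (hy0 : S.le 0 y) (h : x + y = 0) : x = 0 := by
  refine S.le_antisymm x hx 0 S.A.zero_mem ?_ hx0
  rwa [le_iff_nonneg_sub hx S.A.zero_mem, zero_sub, ← eq_neg_of_add_eq_zero_right h]

lemma conj_le_conj {q x y : R} (hq : q ∈ S.A) (hq0 : S.le 0 q) (hx : x ∈ S.A) (hy : y ∈ S.A)
    (h : S.le x y) : S.le (q * x * q) (q * y * q) := by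
  rw [le_iff_nonneg_sub (S.quad_mem q hq x hx) (S.quad_mem q hq y hy),
    show q * y * q - q * x * q = q * (y - x) * q by noncomm_ring]
  exact S.quad_nn q hq _ (S.A.sub_mem hy hx) hq0 ((le_iff_nonneg_sub hx hy).1 h)

lemma mul_eq_zero_comm_of_nonneg {x y : R} (hx : x ∈ S.A) (hx0 : S.le 0 x) (hy : y ∈ S.A) :
    x * y = 0 ↔ y * x = 0 :=
  ⟨fun h => (S.quad_zero y hy x hx hx0 (by rw [mul_assoc, h, mul_zero])).1,
    fun h => (S.quad_zero y hy x hx hx0 (by rw [h, zero_mul])).2⟩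

lemma isProj_carr {x : R} (hx : x ∈ S.A) : S.IsProj (S.carr x) :=
  ⟨S.carr_mem x hx, S.carr_idem x hx⟩

namespace IsProj

variable {q : R} (hq : S.IsProj q)
include hq

lemma nonneg : S.le 0 q := by
  simpa [hq.2] using S.sq_nn q hq.1

lemma one_sub : S.IsProj (1 - q) :=
  ⟨S.A.sub_mem S.one_mem hq.1, by simp only [sub_mul, mul_sub, one_mul, mul_one, hq.2]; abel⟩

lemma le_one : S.le q 1 :=
  (le_iff_nonneg_sub hq.1 S.one_mem).2 hq.one_sub.nonneg

lemma conj_smul_one (r : ℝ) : q * (r • (1 : R)) * q = r • q := by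
  rw [mul_smul_comm, mul_one, smul_mul_assoc, hq.2]

lemma sub_of_mul_eq {p : R} (hp : S.IsProj p) (h₁ : p * q = p) (h₂ : q * p = p) :
    S.IsProj (q - p) :=
  ⟨S.A.sub_mem hq.1 hp.1, by simp only [sub_mul, mul_sub, hq.2, hp.2, h₁, h₂]; abel⟩

lemma le_iff {p : R} (hp : S.IsProj p) : S.le p q ↔ p * q = p ∧ q * p = p := by
  constructor
  · intro h
    have hq' := hq.one_sub
    have hzero : (1 - q) * p * (1 - q) = 0 := by
      refine S.le_antisymm _ (S.quad_mem _ hq'.1 p hp.1) 0 S.A.zero_mem ?_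
        (S.quad_nn _ hq'.1 p hp.1 hq'.nonneg hp.nonneg)
      convert conj_le_conj hq'.1 hq'.nonneg hp.1 hq.1 h using 1
      simp only [sub_mul, one_mul, hq.2, sub_self, zero_mul]
    obtain ⟨h₁, h₂⟩ := S.quad_zero _ hq'.1 p hp.1 hp.nonneg hzero
    rw [sub_mul, one_mul, sub_eq_zero] at h₁
    rw [mul_sub, mul_one, sub_eq_zero] at h₂
    exact ⟨h₂.symm, h₁.symm⟩
  · rintro ⟨h₁, h₂⟩
    exact (le_iff_nonneg_sub hp.1 hq.1).2 (hq.sub_of_mul_eq hp h₁ h₂).nonneg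

lemma ouNorm_mul_le {x : R} (hx : x ∈ S.A) (hxq : Commute x q) :
    ouNorm S.le (x * q) ≤ ouNorm S.le x := by
  have hxq_mem := mul_mem_of_commute hx hq.1 hxq
  have hconj : q * x * q = x * q := by rw [← hxq.eq, mul_assoc, hq.2]
  refine le_of_forall_pos_le_add fun ε hε => ?_
  have hc : 0 ≤ ouNorm S.le x + ε := by linarith [ouNorm_nonneg (S := S) x]
  obtain ⟨hlow, hup⟩ := le_smul_one_of_ouNorm_lt hx (lt_add_of_pos_right _ hε)
  have hcq := smul_le_smul_of_nonneg_left hc hq.1 S.one_mem hq.le_one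
  have hlow' := conj_le_conj hq.1 hq.nonneg (smul_one_mem _) hx hlow
  have hup' := conj_le_conj hq.1 hq.nonneg hx (smul_one_mem _) hup
  rw [hconj, hq.conj_smul_one] at hlow' hup'
  refine ouNorm_le_of_le_smul_one hxq_mem ?_
    (S.le_trans _ hxq_mem _ (S.A.smul_mem _ hq.1) _ (smul_one_mem _) hup' hcq)
  refine S.le_trans _ (smul_one_mem _) _ (S.A.smul_mem _ hq.1) _ hxq_mem ?_ hlow'
  refine (le_iff_le_of_sub_eq_sub (smul_one_mem _) (S.A.smul_mem _ hq.1) (S.A.smul_mem _ hq.1)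
    (smul_one_mem _) ?_).2 hcq
  module

end IsProj

end Projection

section SquareRoot

lemma eq_of_mul_self_eq_mul_self {u w : R} (hu : u ∈ S.A) (hw : w ∈ S.A) (hu0 : S.le 0 u)
    (hw0 : S.le 0 w) (hcomm : Commute u w) (hsq : u * u = w * w) : u = w := by
  have hs := S.A.add_mem hu hw
  have he := isProj_carr hs
  set e := S.carr (u + w)
  have hf := he.one_sub
  have hsd : (u + w) * (u - w) = 0 := by
    rw [add_mul, mul_sub, mul_sub, hsq, hcomm.eq]; abel
  have hed : e * (u - w) = 0 := (S.carr_spec _ hs _ (S.A.sub_mem hu hw)).1 hsd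
  have hsf : (u + w) * (1 - e) = 0 :=
    (S.carr_spec _ hs _ hf.1).2 (by rw [mul_sub, mul_one, he.2, sub_self])
  -- `(1 - e)` kills `u + w`, hence kills both nonnegative summands
  have hfu : (1 - e) * u * (1 - e) = 0 := by
    refine eq_zero_of_nonneg_of_add_eq_zero (S.quad_mem _ hf.1 u hu)
      (S.quad_nn _ hf.1 u hu hf.nonneg hu0) (S.quad_nn _ hf.1 w hw hf.nonneg hw0) ?_
    rw [← add_mul, ← mul_add, mul_assoc, hsf, mul_zero]
  have hfw : (1 - e) * w * (1 - e) = 0 := by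
    refine eq_zero_of_nonneg_of_add_eq_zero (S.quad_mem _ hf.1 w hw)
      (S.quad_nn _ hf.1 w hw hf.nonneg hw0) (S.quad_nn _ hf.1 u hu hf.nonneg hu0) ?_
    rw [← add_mul, ← mul_add, add_comm, mul_assoc, hsf, mul_zero]
  have heu := (S.quad_zero _ hf.1 u hu hu0 hfu).1
  have hew := (S.quad_zero _ hf.1 w hw hw0 hfw).1
  rw [sub_mul, one_mul, sub_eq_zero] at heu hew
  rw [← sub_eq_zero, ← hed, mul_sub, ← heu, ← hew]

lemma pospart_eq_mul_one_sub {b q : R} (hb : b ∈ S.A) (hq : S.IsProj q) (hbq : Commute b q)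
    (hneg : S.le (b * q) 0) (hpos : S.le 0 (b * (1 - q))) : S.pospart b = b * (1 - q) := by
  -- `s = 1 - 2q` is a symmetry commuting with `b`, so `b s = b (1 - q) - b q ≥ 0` squares to `b²`
  set s : R := 1 - q - q
  have hs : s ∈ S.A := S.A.sub_mem hq.one_sub.1 hq.1
  have hss : s * s = 1 := by
    simp only [s, sub_mul, mul_sub, one_mul, mul_one, hq.2]; abel
  have hbs : Commute b s := ((Commute.one_right b).sub_right hbq).sub_right hbq
  have hbq_mem := mul_mem_of_commute hb hq.1 hbq
  have hbq'_mem := mul_mem_of_commute hb hq.one_sub.1 ((Commute.one_right b).sub_right hbq)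
  have hu0 : S.le 0 (b * s) := by
    have := add_le_add S.A.zero_mem hbq'_mem hbq_mem S.A.zero_mem hpos hneg
    rwa [le_iff_le_of_sub_eq_sub (S.A.add_mem S.A.zero_mem hbq_mem)
      (S.A.add_mem hbq'_mem S.A.zero_mem) S.A.zero_mem (mul_mem_of_commute hb hs hbs)
      (by simp only [s, mul_sub]; abel)] at this
  have hbb := S.sq_mem b hb
  have hbb0 := S.sq_nn b hb
  have hwb : Commute (S.sqrt (b * b)) b := S.sqrt_bicomm _ hbb hbb0 b hb (mul_assoc b b b)
  have hwq : Commute (S.sqrt (b * b)) q :=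
    S.sqrt_bicomm _ hbb hbb0 q hq.1 ((Commute.mul_left hbq hbq).eq)
  have hws : Commute (S.sqrt (b * b)) s := ((Commute.one_right _).sub_right hwq).sub_right hwq
  have hsqrt : b * s = S.sqrt (b * b) := by
    refine eq_of_mul_self_eq_mul_self (mul_mem_of_commute hb hs hbs) (S.sqrt_mem _ hbb hbb0) hu0
      (S.sqrt_nn _ hbb hbb0) (hwb.symm.mul_left hws.symm) ?_
    rw [S.sqrt_sq _ hbb hbb0, hbs.symm.mul_mul_mul_comm, hss, mul_one]
  unfold pospart absval
  rw [← hsqrt, show b * s + b = (2 : ℝ) • (b * (1 - q)) by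
    simp only [s, mul_sub, mul_one, two_smul]; abel, smul_smul]
  norm_num

end SquareRoot

section WeightedSum

lemma sum_smul_le_sum_smul {ι : Type*} {s : Finset ι} {c d : ι → ℝ} {e : ι → R}
    (he : ∀ i ∈ s, e i ∈ S.A) (he0 : ∀ i ∈ s, S.le 0 (e i))
    (hcd : ∀ i ∈ s, e i ≠ 0 → c i ≤ d i) :
    S.le (∑ i ∈ s, c i • e i) (∑ i ∈ s, d i • e i) := by
  refine sum_le_sum (fun i hi => S.A.smul_mem _ (he i hi)) (fun i hi => S.A.smul_mem _ (he i hi))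
    fun i hi => ?_
  by_cases h0 : e i = 0
  · simpa [h0] using S.le_refl 0 S.A.zero_mem
  · rw [le_iff_nonneg_sub (S.A.smul_mem _ (he i hi)) (S.A.smul_mem _ (he i hi)), ← sub_smul]
    exact S.smul_nonneg _ (sub_nonneg.2 (hcd i hi h0)) _ (he i hi) (he0 i hi)

lemma ouNorm_sum_smul_le {ι : Type*} {s : Finset ι} {c : ι → ℝ} {e : ι → R} {M : ℝ}
    (he : ∀ i ∈ s, e i ∈ S.A) (he0 : ∀ i ∈ s, S.le 0 (e i)) (hsum : ∑ i ∈ s, e i = 1)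
    (hc : ∀ i ∈ s, e i ≠ 0 → |c i| ≤ M) : ouNorm S.le (∑ i ∈ s, c i • e i) ≤ M := by
  have hconst (r : ℝ) : ∑ i ∈ s, r • e i = r • (1 : R) := by rw [← Finset.smul_sum, hsum]
  refine ouNorm_le_of_le_smul_one (S.A.sum_mem fun i hi => S.A.smul_mem _ (he i hi)) ?_ ?_
  · rw [← hconst]
    exact sum_smul_le_sum_smul he he0 fun i hi h0 => (abs_le.1 (hc i hi h0)).1
  · rw [← hconst]
    exact sum_smul_le_sum_smul he he0 fun i hi h0 => (abs_le.1 (hc i hi h0)).2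

end WeightedSum

namespace IsBoundedResId

variable {p : ℝ → R} {K : ℝ} (hp : S.IsBoundedResId p K)
include hp

lemma nonneg : 0 ≤ K := hp.1

lemma isProj (l : ℝ) : S.IsProj (p l) := hp.2.1 l

lemma mem (l : ℝ) : p l ∈ S.A := (hp.isProj l).1

lemma eq_zero {l : ℝ} (hl : l < -K) : p l = 0 := hp.2.2.1 l hl

lemma eq_one {l : ℝ} (hl : K ≤ l) : p l = 1 := hp.2.2.2.1 l hl

lemma mono {l l' : ℝ} (h : l ≤ l') : S.le (p l) (p l') := hp.2.2.2.2.1 l l' h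

lemma isProjInf (l : ℝ) : S.IsProjInf (p l) {x | ∃ l' > l, x = p l'} := hp.2.2.2.2.2 l

lemma sub_nonneg {l l' : ℝ} (h : l ≤ l') : S.le 0 (p l' - p l) :=
  (le_iff_nonneg_sub (hp.mem l) (hp.mem l')).1 (hp.mono h)

lemma sub_mem (l l' : ℝ) : p l' - p l ∈ S.A := S.A.sub_mem (hp.mem l') (hp.mem l)

lemma mul_eq_min (s t : ℝ) : p s * p t = p (min s t) := by
  rcases le_total s t with h | h
  · rw [min_eq_left h, (((hp.isProj t).le_iff (hp.isProj s)).1 (hp.mono h)).1]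
  · rw [min_eq_right h, (((hp.isProj s).le_iff (hp.isProj t)).1 (hp.mono h)).2]

lemma commute (s t : ℝ) : Commute (p s) (p t) := by
  rw [Commute, SemiconjBy, hp.mul_eq_min, hp.mul_eq_min, min_comm]

lemma mul_one_sub_eq (s t : ℝ) : p s * (1 - p t) = p (max s t) - p t := by
  rw [mul_sub, mul_one, hp.mul_eq_min]
  rcases le_total s t with h | h
  · rw [min_eq_left h, max_eq_right h, sub_self, sub_self]
  · rw [min_eq_right h, max_eq_left h]

lemma sum_range_sub_eq_one {μ : ℕ → ℝ} {n : ℕ} (h0 : μ 0 < -K) (hn : K ≤ μ n) :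
    ∑ i ∈ Finset.range n, (p (μ (i + 1)) - p (μ i)) = 1 := by
  rw [Finset.sum_range_sub (fun i => p (μ i)), hp.eq_one hn, hp.eq_zero h0, sub_zero]

end IsBoundedResId

def rsSum (p : ℝ → R) (μ γ : ℕ → ℝ) (n : ℕ) : R :=
  ∑ i ∈ Finset.range n, γ i • (p (μ (i + 1)) - p (μ i))

structure IsTaggedPartition (K h : ℝ) (μ γ : ℕ → ℝ) (n : ℕ) : Prop where
  first_lt : μ 0 < -K
  le_last : K ≤ μ n
  lt_succ : ∀ i < n, μ i < μ (i + 1)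
  mesh_le : ∀ i < n, μ (i + 1) - μ i ≤ h
  tag_mem : ∀ i < n, γ i ∈ Set.Icc (μ i) (μ (i + 1))

section RiemannStieltjes

variable {p : ℝ → R} {K : ℝ}

lemma rsSum_mem (hp : S.IsBoundedResId p K) (μ γ : ℕ → ℝ) (n : ℕ) : rsSum p μ γ n ∈ S.A :=
  S.A.sum_mem fun _ _ => S.A.smul_mem _ (hp.sub_mem _ _)

lemma commute_rsSum (hp : S.IsBoundedResId p K) (μ γ : ℕ → ℝ) (n : ℕ) (t : ℝ) :
    Commute (rsSum p μ γ n) (p t) :=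
  Commute.sum_left _ _ _ fun i _ =>
    ((hp.commute _ t).sub_left (hp.commute _ t)).smul_left (γ i)

lemma commute_rsSum_rsSum (hp : S.IsBoundedResId p K) (μ γ μ' γ' : ℕ → ℝ) (n n' : ℕ) :
    Commute (rsSum p μ γ n) (rsSum p μ' γ' n') :=
  Commute.sum_right _ _ _ fun i _ =>
    ((commute_rsSum hp μ γ n _).sub_right (commute_rsSum hp μ γ n _)).smul_right (γ' i)

/-- The summands are the increments of `p` over `[a, b] ∩ [νⱼ, νⱼ₊₁]`. -/
lemma sum_inter_increment (hp : S.IsBoundedResId p K) {a b : ℝ} (hab : a ≤ b) {ν : ℕ → ℝ}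
    {m : ℕ} (h0 : ν 0 < -K) (hm : K ≤ ν m) (hν : ∀ j < m, ν j ≤ ν (j + 1)) :
    ∑ j ∈ Finset.range m, (p (max (min b (ν (j + 1))) (max a (ν j))) - p (max a (ν j)))
      = p b - p a := by
  rw [Finset.sum_congr rfl fun j hj =>
      inter_increment_eq_clamp_increment p hab (hν j (Finset.mem_range.1 hj)),
    Finset.sum_range_sub (fun j => p (max a (min b (ν j))))]
  congr 1
  · rcases le_or_gt b (ν m) with hb | hb
    · rw [min_eq_left hb, max_eq_right hab]
    · rw [hp.eq_one (hm.trans (le_max_of_le_right (le_min hb.le le_rfl))),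
        hp.eq_one (hm.trans hb.le)]
  · rcases le_or_gt (ν 0) a with ha | ha
    · rw [max_eq_left (min_le_of_right_le ha)]
    · rw [hp.eq_zero (max_lt (by linarith) (min_lt_of_right_lt h0)), hp.eq_zero (by linarith)]

lemma ouNorm_rsSum_sub_rsSum_le (hp : S.IsBoundedResId p K) {μ γ μ' γ' : ℕ → ℝ} {n n' : ℕ}
    {h h' : ℝ} (hP : IsTaggedPartition K h μ γ n) (hP' : IsTaggedPartition K h' μ' γ' n') :
    ouNorm S.le (rsSum p μ γ n - rsSum p μ' γ' n') ≤ h + h' := by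
  -- the common refinement: `E (i, j)` is the increment of `p` over `[μᵢ, μᵢ₊₁] ∩ [μ'ⱼ, μ'ⱼ₊₁]`
  set E : ℕ × ℕ → R := fun x =>
    p (max (min (μ (x.1 + 1)) (μ' (x.2 + 1))) (max (μ x.1) (μ' x.2))) - p (max (μ x.1) (μ' x.2))
  have hrow : ∀ i ∈ Finset.range n, ∑ j ∈ Finset.range n', E (i, j) = p (μ (i + 1)) - p (μ i) :=
    fun i hi => sum_inter_increment hp (hP.lt_succ i (Finset.mem_range.1 hi)).le hP'.first_lt
      hP'.le_last fun j hj => (hP'.lt_succ j hj).le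
  have hcol : ∀ j ∈ Finset.range n', ∑ i ∈ Finset.range n, E (i, j) = p (μ' (j + 1)) - p (μ' j) :=
    fun j hj => by
      simp only [E, min_comm (μ _), max_comm (μ _)]
      exact sum_inter_increment hp (hP'.lt_succ j (Finset.mem_range.1 hj)).le hP.first_lt
        hP.le_last fun i hi => (hP.lt_succ i hi).le
  have hdiff : rsSum p μ γ n - rsSum p μ' γ' n'
      = ∑ x ∈ Finset.range n ×ˢ Finset.range n', (γ x.1 - γ' x.2) • E x := by
    simp only [sub_smul, Finset.sum_sub_distrib]
    congr 1
    · rw [Finset.sum_product, rsSum, Finset.sum_congr rfl fun i hi => by rw [← hrow i hi]]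
      simp only [Finset.smul_sum]
    · rw [Finset.sum_product_right, rsSum, Finset.sum_congr rfl fun j hj => by rw [← hcol j hj]]
      simp only [Finset.smul_sum]
  rw [hdiff]
  refine ouNorm_sum_smul_le (fun _ _ => hp.sub_mem _ _)
    (fun _ _ => hp.sub_nonneg (le_max_right _ _)) ?_ fun x hx hE => ?_
  · rw [Finset.sum_product, Finset.sum_congr rfl hrow,
      hp.sum_range_sub_eq_one hP.first_lt hP.le_last]
  · obtain ⟨hi, hj⟩ := Finset.mem_product.1 hx
    have hi := Finset.mem_range.1 hi
    have hj := Finset.mem_range.1 hj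
    have hoverlap : max (μ x.1) (μ' x.2) < min (μ (x.1 + 1)) (μ' (x.2 + 1)) := by
      by_contra! hle
      exact hE (by simp only [E, max_eq_right hle, sub_self])
    simp only [max_lt_iff, lt_min_iff] at hoverlap
    have := hP.mesh_le _ hi
    have := hP'.mesh_le _ hj
    have := hP.tag_mem _ hi
    have := hP'.tag_mem _ hj
    simp only [Set.mem_Icc] at *
    rw [abs_le]
    constructor <;> linarith

end RiemannStieltjes

section LowerSum

variable {p : ℝ → R} {K : ℝ}

lemma rsSum_le_rsSum_of_refine (hp : S.IsBoundedResId p K) {μ ν : ℕ → ℝ}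
    (hν : ∀ i, ν (2 * i) = μ i) (hmid : ∀ i, ν (2 * i + 1) ∈ Set.Icc (μ i) (μ (i + 1)))
    (n : ℕ) : S.le (rsSum p μ μ n) (rsSum p ν ν (2 * n)) := by
  rw [rsSum, rsSum, Finset.sum_range_two_mul]
  refine sum_le_sum (fun i _ => S.A.smul_mem _ (hp.sub_mem _ _))
    (fun i _ => S.A.add_mem (S.A.smul_mem _ (hp.sub_mem _ _)) (S.A.smul_mem _ (hp.sub_mem _ _)))
    fun i _ => ?_
  rw [show 2 * i + 1 + 1 = 2 * (i + 1) by ring, hν, hν]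
  obtain ⟨hlo, hhi⟩ := hmid i
  set m := ν (2 * i + 1)
  rw [le_iff_nonneg_sub (S.A.smul_mem _ (hp.sub_mem _ _))
    (S.A.add_mem (S.A.smul_mem _ (hp.sub_mem _ _)) (S.A.smul_mem _ (hp.sub_mem _ _))),
    show μ i • (p m - p (μ i)) + m • (p (μ (i + 1)) - p m) - μ i • (p (μ (i + 1)) - p (μ i))
      = (m - μ i) • (p (μ (i + 1)) - p m) by module]
  exact S.smul_nonneg _ (sub_nonneg.2 hlo) _ (hp.sub_mem _ _) (hp.sub_nonneg hhi)

lemma rsSum_mul_le (hp : S.IsBoundedResId p K) {μ : ℕ → ℝ} {n : ℕ} {h : ℝ}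
    (hP : IsTaggedPartition K h μ μ n) (t : ℝ) :
    S.le (rsSum p μ μ n * p t) (t • p t) := by
  have hsum : rsSum p μ μ n * p t
      = ∑ i ∈ Finset.range n, μ i • (p (min (μ (i + 1)) t) - p (min (μ i) t)) := by
    simp only [rsSum, Finset.sum_mul, smul_mul_assoc, sub_mul, hp.mul_eq_min]
  have htel : ∑ i ∈ Finset.range n, t • (p (min (μ (i + 1)) t) - p (min (μ i) t)) = t • p t := by
    rw [← Finset.smul_sum, Finset.sum_range_sub (fun i => p (min (μ i) t)),
      hp.eq_zero (min_lt_of_left_lt hP.first_lt)]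
    rcases le_total t (μ n) with h1 | h1
    · rw [min_eq_right h1, sub_zero]
    · rw [min_eq_left h1, hp.eq_one hP.le_last, hp.eq_one (hP.le_last.trans h1), sub_zero]
  rw [hsum, ← htel]
  refine sum_smul_le_sum_smul (fun i _ => hp.sub_mem _ _)
    (fun i hi => hp.sub_nonneg (min_le_min_right t (hP.lt_succ i (Finset.mem_range.1 hi)).le))
    fun i hi hne => ?_
  by_contra! hti
  exact hne (by rw [min_eq_right hti.le,
    min_eq_right (hti.trans (hP.lt_succ i (Finset.mem_range.1 hi))).le, sub_self])

lemma smul_le_rsSum_mul_one_sub (hp : S.IsBoundedResId p K) {μ : ℕ → ℝ} {n : ℕ} {h : ℝ}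
    (hP : IsTaggedPartition K h μ μ n) (t : ℝ) :
    S.le ((t - h) • (1 - p t)) (rsSum p μ μ n * (1 - p t)) := by
  have hsum : rsSum p μ μ n * (1 - p t)
      = ∑ i ∈ Finset.range n, μ i • (p (max (μ (i + 1)) t) - p (max (μ i) t)) := by
    simp only [rsSum, Finset.sum_mul, smul_mul_assoc, sub_mul, hp.mul_one_sub_eq,
      sub_sub_sub_cancel_right]
  have htel : ∑ i ∈ Finset.range n, (t - h) • (p (max (μ (i + 1)) t) - p (max (μ i) t))
      = (t - h) • (1 - p t) := by
    rw [← Finset.smul_sum, Finset.sum_range_sub (fun i => p (max (μ i) t)),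
      hp.eq_one (hP.le_last.trans (le_max_left _ _))]
    rcases le_total (μ 0) t with h1 | h1
    · rw [max_eq_right h1]
    · rw [max_eq_left h1, hp.eq_zero hP.first_lt, hp.eq_zero (h1.trans_lt hP.first_lt)]
  rw [hsum, ← htel]
  refine sum_smul_le_sum_smul (fun i _ => hp.sub_mem _ _)
    (fun i hi => hp.sub_nonneg (max_le_max_right t (hP.lt_succ i (Finset.mem_range.1 hi)).le))
    fun i hi hne => ?_
  have hi := Finset.mem_range.1 hi
  by_contra! hti
  have hit : μ (i + 1) ≤ t := by linarith [hP.mesh_le i hi]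
  exact hne (by rw [max_eq_right hit, max_eq_right ((hP.lt_succ i hi).le.trans hit), sub_self])

end LowerSum

noncomputable def dyadic (K : ℝ) (k i : ℕ) : ℝ := -K - 1 + (2 * K + 2) * i / 2 ^ k

lemma dyadic_add_one_sub (K : ℝ) (k i : ℕ) :
    dyadic K k (i + 1) - dyadic K k i = (2 * K + 2) / 2 ^ k := by
  simp only [dyadic]; push_cast; ring

lemma dyadic_succ_two_mul (K : ℝ) (k i : ℕ) : dyadic K (k + 1) (2 * i) = dyadic K k i := by
  simp only [dyadic]; push_cast; field_simp; ring

lemma isTaggedPartition_dyadic {K : ℝ} (hK : 0 ≤ K) (k : ℕ) :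
    IsTaggedPartition K ((2 * K + 2) / 2 ^ k) (dyadic K k) (dyadic K k) (2 ^ k) where
  first_lt := by simp [dyadic]
  le_last := by simp only [dyadic]; push_cast; field_simp; linarith
  lt_succ i _ := by linarith [dyadic_add_one_sub K k i, (by positivity : 0 < (2 * K + 2) / 2 ^ k)]
  mesh_le i _ := (dyadic_add_one_sub K k i).le
  tag_mem i _ := ⟨le_rfl, by
    linarith [dyadic_add_one_sub K k i, (by positivity : 0 < (2 * K + 2) / 2 ^ k)]⟩

lemma tendsto_mesh_dyadic (K : ℝ) :
    Tendsto (fun k : ℕ => (2 * K + 2) / 2 ^ k) atTop (𝓝 0) := by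
  simpa [div_eq_mul_inv] using (tendsto_pow_atTop_nhds_zero_of_lt_one (by norm_num : (0 : ℝ) ≤ 2⁻¹)
    (by norm_num)).const_mul (2 * K + 2)

/-- Tags at left endpoints make these sums increase with `k`, as SA8 requires. -/
noncomputable def dyadicSum (p : ℝ → R) (K : ℝ) (k : ℕ) : R :=
  rsSum p (dyadic K k) (dyadic K k) (2 ^ k)

lemma dyadicSum_le_succ {p : ℝ → R} {K : ℝ} (hp : S.IsBoundedResId p K) (k : ℕ) :
    S.le (dyadicSum p K k) (dyadicSum p K (k + 1)) := by
  have hstep : 0 < (2 * K + 2) / 2 ^ (k + 1) := div_pos (by linarith [hp.nonneg]) (by positivity)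
  rw [dyadicSum, dyadicSum, pow_succ']
  refine rsSum_le_rsSum_of_refine hp (dyadic_succ_two_mul K k) (fun i => ?_) _
  rw [← dyadic_succ_two_mul K k i, ← dyadic_succ_two_mul K k (i + 1),
    show 2 * (i + 1) = 2 * i + 1 + 1 by ring]
  constructor <;>
    linarith [dyadic_add_one_sub K (k + 1) (2 * i), dyadic_add_one_sub K (k + 1) (2 * i + 1)]

section Limit

lemma ouNorm_zero : ouNorm S.le (0 : R) = 0 :=
  _root_.le_antisymm (by simpa using ouNorm_smul_one_le (S := S) 0) (ouNorm_nonneg 0)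

lemma le_of_tendsto {x y : R} {f g : ℕ → R} (hx : x ∈ S.A) (hy : y ∈ S.A) (hf : ∀ k, f k ∈ S.A)
    (hg : ∀ k, g k ∈ S.A) (hfx : Tendsto (fun k => ouNorm S.le (x - f k)) atTop (𝓝 0))
    (hgy : Tendsto (fun k => ouNorm S.le (y - g k)) atTop (𝓝 0))
    (hfg : ∀ k, S.le (f k) (g k)) : S.le x y := by
  refine le_of_forall_pos_le_add_smul_one hx hy fun ε hε => ?_
  obtain ⟨k, hfk, hgk⟩ := ((hfx.eventually (gt_mem_nhds (half_pos hε))).and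
    (hgy.eventually (gt_mem_nhds (half_pos hε)))).exists
  have hxf := S.A.sub_mem hx (hf k)
  have hyg := S.A.sub_mem hy (hg k)
  have hsum := add_le_add (S.A.add_mem hxf (hf k)) (S.A.add_mem (smul_one_mem _) (hg k))
    (smul_one_mem _) hyg (add_le_add hxf (smul_one_mem _) (hf k) (hg k)
      (le_smul_one_of_ouNorm_lt hxf hfk).2 (hfg k)) (le_smul_one_of_ouNorm_lt hyg hgk).1
  refine (le_iff_le_of_sub_eq_sub (S.A.add_mem (S.A.add_mem hxf (hf k)) (smul_one_mem _))
    (S.A.add_mem (S.A.add_mem (smul_one_mem _) (hg k)) hyg) hx (S.A.add_mem hy (smul_one_mem _))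
    ?_).1 hsum
  module

lemma IsProj.tendsto_mul {q x : R} {f : ℕ → R} (hq : S.IsProj q) (hx : x ∈ S.A)
    (hf : ∀ k, f k ∈ S.A) (hxq : Commute x q) (hfq : ∀ k, Commute (f k) q)
    (h : Tendsto (fun k => ouNorm S.le (x - f k)) atTop (𝓝 0)) :
    Tendsto (fun k => ouNorm S.le (x * q - f k * q)) atTop (𝓝 0) :=
  squeeze_zero (fun k => ouNorm_nonneg _) (fun k => by
    rw [← sub_mul]; exact hq.ouNorm_mul_le (S.A.sub_mem hx (hf k)) (hxq.sub_left (hfq k))) h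

variable {p : ℝ → R} {K : ℝ}

lemma exists_tendsto_dyadicSum (hB : S.IsBanach) (hp : S.IsBoundedResId p K) :
    ∃ a ∈ S.A, Tendsto (fun k => ouNorm S.le (a - dyadicSum p K k)) atTop (𝓝 0) := by
  refine hB _ (fun k => rsSum_mem hp _ _ _) fun ε hε => ?_
  obtain ⟨N, hN⟩ := ((tendsto_mesh_dyadic K).eventually
    (gt_mem_nhds (half_pos hε))).exists_forall_of_atTop
  refine ⟨N, fun m hm n hn => ?_⟩
  calc ouNorm S.le (dyadicSum p K m - dyadicSum p K n)
      ≤ (2 * K + 2) / 2 ^ m + (2 * K + 2) / 2 ^ n :=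
        ouNorm_rsSum_sub_rsSum_le hp (isTaggedPartition_dyadic hp.nonneg m)
          (isTaggedPartition_dyadic hp.nonneg n)
    _ < ε := by linarith [hN m hm, hN n hn]

variable (hp : S.IsBoundedResId p K) {a : R} (ha : a ∈ S.A)
  (hlim : Tendsto (fun k => ouNorm S.le (a - dyadicSum p K k)) atTop (𝓝 0))
include hp ha hlim

lemma commute_of_tendsto_dyadicSum (t : ℝ) : Commute a (p t) :=
  S.comm_closed a ha (p t) (hp.mem t) _ (fun _ => rsSum_mem hp _ _ _) (dyadicSum_le_succ hp)
    (fun _ _ => commute_rsSum_rsSum hp _ _ _ _ _ _) (fun _ => commute_rsSum hp _ _ _ t) hlim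

lemma mul_le_smul_of_tendsto_dyadicSum (t : ℝ) : S.le (a * p t) (t • p t) := by
  have hq := hp.isProj t
  refine le_of_tendsto (mul_mem_of_commute ha hq.1 (commute_of_tendsto_dyadicSum hp ha hlim t))
    (S.A.smul_mem t hq.1) (fun k => mul_mem_of_commute (rsSum_mem hp _ _ _) hq.1
      (commute_rsSum hp _ _ _ t)) (fun _ => S.A.smul_mem t hq.1)
    (hq.tendsto_mul ha (fun k => rsSum_mem hp _ _ _) (commute_of_tendsto_dyadicSum hp ha hlim t)
      (fun k => commute_rsSum hp _ _ _ t) hlim) (by simp [ouNorm_zero])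
    fun k => rsSum_mul_le hp (isTaggedPartition_dyadic hp.nonneg k) t

lemma smul_le_mul_one_sub_of_tendsto_dyadicSum (t : ℝ) :
    S.le (t • (1 - p t)) (a * (1 - p t)) := by
  have hq := (hp.isProj t).one_sub
  have hcomm (x : R) (hx : Commute x (p t)) : Commute x (1 - p t) :=
    (Commute.one_right x).sub_right hx
  have hmesh : Tendsto (fun k : ℕ => ouNorm S.le
      (t • (1 - p t) - (t - (2 * K + 2) / 2 ^ k) • (1 - p t))) atTop (𝓝 0) := by
    refine squeeze_zero (fun k => ouNorm_nonneg _) (fun k => ?_)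
      (by simpa using (tendsto_mesh_dyadic K).abs)
    rw [← sub_smul, sub_sub_cancel, ← smul_one_mul]
    exact (hq.ouNorm_mul_le (smul_one_mem _) ((Commute.one_left _).smul_left _)).trans
      (ouNorm_smul_one_le _)
  refine le_of_tendsto (S.A.smul_mem t hq.1)
    (mul_mem_of_commute ha hq.1 (hcomm a (commute_of_tendsto_dyadicSum hp ha hlim t)))
    (fun _ => S.A.smul_mem _ hq.1)
    (fun k => mul_mem_of_commute (rsSum_mem hp _ _ _) hq.1 (hcomm _ (commute_rsSum hp _ _ _ t)))
    hmesh (hq.tendsto_mul ha (fun k => rsSum_mem hp _ _ _)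
      (hcomm a (commute_of_tendsto_dyadicSum hp ha hlim t))
      (fun k => hcomm _ (commute_rsSum hp _ _ _ t)) hlim)
    fun k => smul_le_rsSum_mul_one_sub hp (isTaggedPartition_dyadic hp.nonneg k) t

end Limit

section SpectralResolution

lemma mul_eq_zero_of_mul_eq_smul {f a r : R} {l t : ℝ} (hf : S.IsProj f) (ha : a ∈ S.A)
    (hr : S.IsProj r) (har : Commute a r) (hfa : f * a = l • f) (hlt : l < t)
    (h : S.le (t • r) (a * r)) : f * r = 0 := by
  have hfrf := S.quad_mem f hf.1 r hr.1
  have hconj := conj_le_conj hf.1 hf.nonneg (S.A.smul_mem t hr.1) (mul_mem_of_commute ha hr.1 har) h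
  rw [mul_smul_comm, smul_mul_assoc, ← mul_assoc f a r, hfa, smul_mul_assoc, smul_mul_assoc]
    at hconj
  have hle : S.le (f * r * f) 0 := by
    have := S.smul_nonneg (t - l)⁻¹ (inv_nonneg.2 (sub_nonneg.2 hlt.le)) _
      (S.A.sub_mem (S.A.smul_mem _ hfrf) (S.A.smul_mem _ hfrf))
      ((le_iff_nonneg_sub (S.A.smul_mem _ hfrf) (S.A.smul_mem _ hfrf)).1 hconj)
    rw [le_iff_nonneg_sub hfrf S.A.zero_mem]
    convert this using 1
    rw [← sub_smul, smul_smul,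
      show (t - l)⁻¹ * (l - t) = -1 by field_simp [(sub_pos.2 hlt).ne']; ring,
      neg_one_smul, zero_sub]
  exact (S.quad_zero f hf.1 r hr.1 hr.nonneg
    (S.le_antisymm _ hfrf 0 S.A.zero_mem hle (S.quad_nn f hf.1 r hr.1 hf.nonneg hr.nonneg))).1

lemma one_sub_sub_carr_spec {b q : R} (hb : b ∈ S.A) (hq : S.IsProj q) (hbq : Commute b q)
    (hneg : S.le (b * q) 0) (hpos : S.le 0 (b * (1 - q))) :
    S.IsProj (1 - q - S.carr (b * (1 - q))) ∧ (1 - q - S.carr (b * (1 - q))) * q = 0 ∧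
      (1 - q - S.carr (b * (1 - q))) * b = 0 := by
  have hbq_mem := mul_mem_of_commute hb hq.1 hbq
  have hc := mul_mem_of_commute hb hq.one_sub.1 ((Commute.one_right b).sub_right hbq)
  have he := isProj_carr hc
  set e := S.carr (b * (1 - q))
  have heq : e * q = 0 := (S.carr_spec _ hc q hq.1).1 (by
    rw [mul_assoc, sub_mul, one_mul, hq.2, sub_self, mul_zero])
  have hqe : q * e = 0 := (mul_eq_zero_comm_of_nonneg hq.1 hq.nonneg he.1).2 heq
  have hf := hq.one_sub.sub_of_mul_eq he (by rw [mul_sub, mul_one, heq, sub_zero])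
    (by rw [sub_mul, one_mul, hqe, sub_zero])
  set f := 1 - q - e
  have hfq : f * q = 0 := by simp only [f, sub_mul, one_mul, hq.2, heq, sub_self]
  have hqf : q * f = 0 := by simp only [f, mul_sub, mul_one, hq.2, hqe, sub_self]
  have hfc : f * (b * (1 - q)) = 0 := by
    refine (mul_eq_zero_comm_of_nonneg hc hpos hf.1).1 ((S.carr_spec _ hc f hf.1).2 ?_)
    rw [mul_sub, mul_sub, mul_one, he.2, heq, sub_zero, sub_self]
  have hfbq : f * (b * q) = 0 := by
    have hnbq : S.le 0 (-(b * q)) := by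
      rwa [le_iff_nonneg_sub hbq_mem S.A.zero_mem, zero_sub] at hneg
    have := (mul_eq_zero_comm_of_nonneg (S.A.neg_mem hbq_mem) hnbq hf.1).1
      (by rw [neg_mul, mul_assoc, hqf, mul_zero, neg_zero])
    rwa [mul_neg, neg_eq_zero] at this
  refine ⟨hf, hfq, ?_⟩
  rw [show b = b * q + b * (1 - q) by noncomm_ring, mul_add, hfbq, hfc, add_zero]

variable {p : ℝ → R} {K : ℝ} (hp : S.IsBoundedResId p K) {a : R} (ha : a ∈ S.A)
  (hle : ∀ t : ℝ, S.le (a * p t) (t • p t)) (hge : ∀ t : ℝ, S.le (t • (1 - p t)) (a * (1 - p t)))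
include hp ha hle hge

lemma ouNorm_le_of_spectral_bounds : ouNorm S.le a ≤ K := by
  refine ouNorm_le_of_le_smul_one ha ?_ ?_
  · refine le_of_forall_pos_le_add_smul_one (smul_one_mem _) ha fun ε hε => ?_
    have := hge (-K - ε)
    rw [hp.eq_zero (by linarith), sub_zero, mul_one] at this
    exact (le_iff_le_of_sub_eq_sub (smul_one_mem _) ha (smul_one_mem _)
      (S.A.add_mem ha (smul_one_mem _)) (by module)).1 this
  · simpa [hp.eq_one le_rfl] using hle K

lemma specProj_eq_of_spectral_bounds (hcomm : ∀ t, Commute a (p t)) (l : ℝ) :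
    S.specProj a l = p l := by
  have hq := hp.isProj l
  have hl : algebraMap ℝ R l = l • 1 := Algebra.algebraMap_eq_smul_one l
  have hb : a - algebraMap ℝ R l ∈ S.A := S.A.sub_mem ha (hl ▸ smul_one_mem l)
  have hbq : Commute (a - algebraMap ℝ R l) (p l) :=
    (hcomm l).sub_left (Algebra.commute_algebraMap_left l (p l))
  have hbr (r : R) : (a - algebraMap ℝ R l) * r = a * r - l • r := by
    rw [sub_mul, hl, smul_one_mul]
  have haq := mul_mem_of_commute ha hq.1 (hcomm l)
  have haq' := mul_mem_of_commute ha hq.one_sub.1 ((Commute.one_right a).sub_right (hcomm l))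
  have hneg : S.le ((a - algebraMap ℝ R l) * p l) 0 := by
    rw [hbr, le_iff_nonneg_sub (S.A.sub_mem haq (S.A.smul_mem l hq.1)) S.A.zero_mem, zero_sub,
      neg_sub]
    exact (le_iff_nonneg_sub haq (S.A.smul_mem l hq.1)).1 (hle l)
  have hpos : S.le 0 ((a - algebraMap ℝ R l) * (1 - p l)) := by
    rw [hbr]
    exact (le_iff_nonneg_sub (S.A.smul_mem l hq.one_sub.1) haq').1 (hge l)
  obtain ⟨hf, hfq, hfb⟩ := one_sub_sub_carr_spec hb hq hbq hneg hpos
  set f := 1 - p l - S.carr ((a - algebraMap ℝ R l) * (1 - p l)) with hf_def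
  have hfa : f * a = l • f := by
    rwa [mul_sub, hl, mul_smul_comm, mul_one, sub_eq_zero] at hfb
  -- `f` lies below every `p t` with `t > l`, hence below their infimum `p l`
  have hf_le : S.le f (p l) := by
    refine (hp.isProjInf l).2.2 f hf ?_
    rintro _ ⟨t, ht, rfl⟩
    have hr := (hp.isProj t).one_sub
    have hfr := mul_eq_zero_of_mul_eq_smul hf ha hr ((Commute.one_right a).sub_right (hcomm t))
      hfa ht (hge t)
    have hrf := (mul_eq_zero_comm_of_nonneg hr.1 hr.nonneg hf.1).2 hfr
    rw [mul_sub, mul_one, sub_eq_zero] at hfr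
    rw [sub_mul, one_mul, sub_eq_zero] at hrf
    exact ((hp.isProj t).le_iff hf).2 ⟨hfr.symm, hrf.symm⟩
  have hf0 : f = 0 := by rw [← ((hq.le_iff hf).1 hf_le).1, hfq]
  rw [specProj, pospart_eq_mul_one_sub hb hq hbq hneg hpos, ← sub_eq_zero, ← hf0, hf_def]
  abel

end SpectralResolution

variable {p : ℝ → R} {K : ℝ}

lemma exists_ouNorm_sub_rsSum_lt (hp : S.IsBoundedResId p K) {a : R} (ha : a ∈ S.A)
    (hlim : Tendsto (fun k => ouNorm S.le (a - dyadicSum p K k)) atTop (𝓝 0)) {ε : ℝ}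
    (hε : 0 < ε) : ∃ δ > 0, ∀ (n : ℕ) (μ γ : ℕ → ℝ), IsTaggedPartition K δ μ γ n →
      ouNorm S.le (a - rsSum p μ γ n) < ε := by
  obtain ⟨k, hk, hmesh⟩ := ((hlim.eventually (gt_mem_nhds (by positivity : 0 < ε / 3))).and
    ((tendsto_mesh_dyadic K).eventually (gt_mem_nhds (by positivity : 0 < ε / 3)))).exists
  refine ⟨ε / 3, by positivity, fun n μ γ hP => ?_⟩
  have hL : dyadicSum p K k ∈ S.A := rsSum_mem hp _ _ _
  calc ouNorm S.le (a - rsSum p μ γ n)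
      ≤ ouNorm S.le (a - dyadicSum p K k) + ouNorm S.le (dyadicSum p K k - rsSum p μ γ n) := by
        simpa only [sub_add_sub_cancel] using
          ouNorm_add_le (S.A.sub_mem ha hL) (S.A.sub_mem hL (rsSum_mem hp μ γ n))
    _ ≤ ouNorm S.le (a - dyadicSum p K k) + ((2 * K + 2) / 2 ^ k + ε / 3) := by
        gcongr
        exact ouNorm_rsSum_sub_rsSum_le hp (isTaggedPartition_dyadic hp.nonneg k) hP
    _ < ε := by linarith

end SynapticAlgebra

/-- In a Banach synaptic algebra, the Riemann–Stieltjes sums for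
`∫_{−K}^{K} λ dp_λ` attached to a bounded resolution of identity `(p_λ)` converge in norm
to an element `a ∈ A` with `‖a‖ ≤ K` whose spectral resolution is `(p_λ)`. -/
theorem boundedResId_integral {R : Type*} [Ring R] [Algebra ℝ R]
    (S : SynapticAlgebra R) (hB : S.IsBanach) (p : ℝ → R) (K : ℝ)
    (hp : S.IsBoundedResId p K) :
    ∃ a ∈ S.A, ouNorm S.le a ≤ K ∧ (∀ l : ℝ, S.specProj a l = p l) ∧
      ∀ ε : ℝ, 0 < ε → ∃ δ : ℝ, 0 < δ ∧
        ∀ (n : ℕ) (μ γ : ℕ → ℝ), 0 < n →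
          μ 0 < -K → K ≤ μ n →
          (∀ i < n, μ i < μ (i + 1)) →
          (∀ i < n, μ (i + 1) - μ i < δ) →
          (∀ i < n, μ i ≤ γ i ∧ γ i ≤ μ (i + 1)) →
          ouNorm S.le (a - ∑ i ∈ Finset.range n, γ i • (p (μ (i + 1)) - p (μ i))) < ε := by
  open SynapticAlgebra in
  obtain ⟨a, ha, hlim⟩ := exists_tendsto_dyadicSum hB hp
  have hle := mul_le_smul_of_tendsto_dyadicSum hp ha hlim
  have hge := smul_le_mul_one_sub_of_tendsto_dyadicSum hp ha hlim
  refine ⟨a, ha, ouNorm_le_of_spectral_bounds hp ha hle hge,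
    specProj_eq_of_spectral_bounds hp ha hle hge (commute_of_tendsto_dyadicSum hp ha hlim),
    fun ε hε => ?_⟩
  obtain ⟨δ, hδ, hrs⟩ := exists_ouNorm_sub_rsSum_lt hp ha hlim hε
  exact ⟨δ, hδ, fun n μ γ _ h0 hn hmono hmesh htag =>
    hrs n μ γ ⟨h0, hn, hmono, fun i hi => (hmesh i hi).le, htag⟩⟩
end
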